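/- arXiv:1706.06675 — 11 statements merged into one kernel-verified Lean document; each statement's English description precedes it below -/
import Mathlib

section
/- Let H be a real Hilbert space, I = {1,…,m}, and for each i let L_i : H → H be an α_i-relaxed cutter with α_i ∈ (0,2), such that ⋂_{i∈I} Fix L_i ≠ ∅. Then the composition P_m := L_m L_{m−1} ⋯ L_1 is a γ_m-relaxed cutter, where γ_m = 2 / ((Σ_{i=1}^m α_i/(2 − α_i))^{−1} + 1). -/
open RealInnerProductSpace

private lemma cutter_key (a b A B s t : ℝ) (ha : 0 ≤ a) (hb : 0 ≤ b) (hs : 0 < s)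
    (ht : 0 ≤ t) (h1 : a^2 ≤ s*A) (h2 : b^2 ≤ t*B) (hB : 0 ≤ B) :
    (a+b)^2 ≤ (s+t)*(A+B) := by
  rcases eq_or_lt_of_le ht with h|h
  · have hb0 : b = 0 := by nlinarith
    subst hb0
    rw [← h]
    nlinarith [mul_nonneg hs.le hB]
  · nlinarith [sq_nonneg (t*a - s*b), mul_le_mul_of_nonneg_left h1 ht,
      mul_le_mul_of_nonneg_left h2 hs.le, mul_pos hs h]

private lemma cutter_single {H : Type*} [NormedAddCommGroup H] [InnerProductSpace ℝ H]
    (α : ℝ) (hα : α ∈ Set.Ioo (0:ℝ) 2) (x z Lx : H)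
    (h : α * ⟪Lx - x, z - x⟫ ≥ ‖Lx - x‖^2) :
    ‖Lx - x‖^2 ≤ α/(2-α) * (‖x - z‖^2 - ‖Lx - z‖^2) := by
  obtain ⟨h0, h2⟩ := hα
  have h1 : ‖x - z‖^2 - ‖Lx - z‖^2 = 2*⟪Lx - x, z - x⟫ - ‖Lx - x‖^2 := by
    have e1 : Lx - z = (Lx - x) - (z - x) := by abel
    have e2 : ‖x - z‖ = ‖z - x‖ := norm_sub_rev _ _
    have e3 : ‖(Lx - x) - (z - x)‖^2 = ‖Lx - x‖^2 - 2*⟪Lx - x, z - x⟫ + ‖z - x‖^2 :=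
      norm_sub_sq_real _ _
    rw [e1, e2, e3]; ring
  rw [h1, div_mul_eq_mul_div, le_div_iff₀ (by linarith)]
  nlinarith

private lemma cutter_aux {H : Type*} [NormedAddCommGroup H] [InnerProductSpace ℝ H] :
    ∀ (m : ℕ) (L : Fin m → H → H) (α : Fin m → ℝ),
    (∀ i, α i ∈ Set.Ioo (0:ℝ) 2) →
    (∀ i x z, L i z = z → α i * ⟪L i x - x, z - x⟫ ≥ ‖L i x - x‖^2) →
    ∀ x z, (∀ i, L i z = z) →
      ‖Fin.foldl m (fun y i => L i y) x - x‖^2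
        ≤ (∑ i, α i/(2 - α i)) * (‖x - z‖^2 - ‖Fin.foldl m (fun y i => L i y) x - z‖^2)
      ∧ ‖Fin.foldl m (fun y i => L i y) x - z‖^2 ≤ ‖x - z‖^2
      ∧ (‖Fin.foldl m (fun y i => L i y) x - z‖^2 = ‖x - z‖^2 → ∀ i, L i x = x) := by
  intro m
  induction m with
  | zero =>
    intro L α hα hc x z hz
    refine ⟨by simp [Fin.foldl_zero], by simp [Fin.foldl_zero], fun _ i => i.elim0⟩
  | succ n ih =>
    intro L α hα hc x z hz
    rw [Fin.foldl_succ]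
    set y := L (0 : Fin (n+1)) x with hy
    obtain ⟨ih1, ih2, ih3⟩ := ih (fun i => L i.succ) (fun i => α i.succ)
      (fun i => hα i.succ) (fun i => hc i.succ) y z (fun i => hz i.succ)
    set Q := Fin.foldl n (fun (x : H) (i : Fin n) => L i.succ x) y with hQ
    set s' : ℝ := ∑ i : Fin n, α i.succ / (2 - α i.succ) with hs'
    have hs'0 : 0 ≤ s' := Finset.sum_nonneg fun i _ =>
      le_of_lt (div_pos (hα i.succ).1 (by linarith [(hα i.succ).2]))
    have hα0 := hα 0
    have hs0 : 0 < α 0 / (2 - α 0) := div_pos hα0.1 (by linarith [hα0.2])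
    have hstep : ‖y - x‖^2 ≤ α 0/(2 - α 0) * (‖x - z‖^2 - ‖y - z‖^2) :=
      cutter_single (α 0) hα0 x z y (hc 0 x z (hz 0))
    have hA : 0 ≤ ‖x - z‖^2 - ‖y - z‖^2 := by nlinarith [sq_nonneg ‖y - x‖]
    have hB : 0 ≤ ‖y - z‖^2 - ‖Q - z‖^2 := by linarith
    have hsum : (∑ i : Fin (n+1), α i/(2 - α i))
        = α 0/(2 - α 0) + s' := by rw [hs', Fin.sum_univ_succ]
    refine ⟨?_, by linarith, ?_⟩
    · -- main inequality
      have htri : ‖Q - x‖ ≤ ‖y - x‖ + ‖Q - y‖ := by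
        have : Q - x = (y - x) + (Q - y) := by abel
        rw [this]; exact norm_add_le _ _
      have hsq : ‖Q - x‖^2 ≤ (‖y - x‖ + ‖Q - y‖)^2 := by
        have := norm_nonneg (Q - x)
        nlinarith
      have hk := cutter_key ‖y - x‖ ‖Q - y‖ (‖x - z‖^2 - ‖y - z‖^2)
        (‖y - z‖^2 - ‖Q - z‖^2) (α 0/(2 - α 0)) s'
        (norm_nonneg _) (norm_nonneg _) hs0 hs'0 hstep ih1 hB
      rw [hsum]
      calc ‖Q - x‖^2 ≤ (‖y - x‖ + ‖Q - y‖)^2 := hsq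
        _ ≤ (α 0/(2 - α 0) + s') * ((‖x - z‖^2 - ‖y - z‖^2) + (‖y - z‖^2 - ‖Q - z‖^2)) := hk
        _ = (α 0/(2 - α 0) + s') * (‖x - z‖^2 - ‖Q - z‖^2) := by ring
    · -- rigidity
      intro heq
      have hyz : ‖y - z‖^2 = ‖x - z‖^2 := by linarith
      have hyx : y = x := by
        have : ‖y - x‖^2 ≤ 0 := by
          have := hstep; rw [hyz] at this; simpa using this
        have := sq_nonneg ‖y - x‖
        have h0 : ‖y - x‖ = 0 := by nlinarith
        rw [norm_eq_zero] at h0; exact sub_eq_zero.1 h0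
      have htail : ∀ i : Fin n, L i.succ x = x := by
        have := ih3 (by rw [heq, hyz])
        intro i; have h := this i; rwa [hyx] at h
      intro i
      refine Fin.cases ?_ ?_ i
      · rw [← hy, hyx]
      · exact htail

theorem composition_relaxed_cutter (H : Type*) [NormedAddCommGroup H] [InnerProductSpace ℝ H]
    (m : ℕ) (L : Fin m → H → H) (α : Fin m → ℝ)
    (hα : ∀ i, α i ∈ Set.Ioo (0 : ℝ) 2)
    (hcutter : ∀ i, ∀ x z, z ∈ Function.fixedPoints (L i) →
      α i * ⟪L i x - x, z - x⟫ ≥ ‖L i x - x‖ ^ 2)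
    (hfix : (⋂ i, Function.fixedPoints (L i)).Nonempty)
    (P : H → H) (hP : P = fun x => Fin.foldl m (fun y i => L i y) x)
    (γ : ℝ) (hγ : γ = 2 / ((∑ i, α i / (2 - α i))⁻¹ + 1)) :
    ∀ x z, z ∈ Function.fixedPoints P → γ * ⟪P x - x, z - x⟫ ≥ ‖P x - x‖ ^ 2 := by
  subst hP
  intro x z hz
  have hPz : Fin.foldl m (fun y i => L i y) z = z := hz
  rcases Nat.eq_zero_or_pos m with hm | hm
  · subst hm
    simp [Fin.foldl_zero]
  · set s : ℝ := ∑ i, α i / (2 - α i) with hs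
    have hspos : 0 < s := Finset.sum_pos
      (fun i _ => div_pos (hα i).1 (by linarith [(hα i).2]))
      (by simpa [Finset.univ_nonempty_iff] using Fin.pos_iff_nonempty.1 hm)
    obtain ⟨w, hw⟩ := hfix
    simp only [Set.mem_iInter] at hw
    have hw' : ∀ i, L i w = w := fun i => hw i
    have hc' : ∀ i x z, L i z = z → α i * ⟪L i x - x, z - x⟫ ≥ ‖L i x - x‖^2 :=
      fun i x z h => hcutter i x z h
    -- z is a common fixed point
    have hzfix : ∀ i, L i z = z := by
      obtain ⟨_, _, h3⟩ := cutter_aux m L α hα hc' z w hw'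
      exact h3 (by rw [hPz])
    obtain ⟨h1, _, _⟩ := cutter_aux m L α hα hc' x z hzfix
    set d := Fin.foldl m (fun y i => L i y) x - x with hd
    have hexp : ‖x - z‖^2 - ‖Fin.foldl m (fun y i => L i y) x - z‖^2
        = 2*⟪d, z - x⟫ - ‖d‖^2 := by
      have e1 : Fin.foldl m (fun y i => L i y) x - z = d - (z - x) := by rw [hd]; abel
      have e2 : ‖x - z‖ = ‖z - x‖ := norm_sub_rev _ _
      have e3 : ‖d - (z - x)‖^2 = ‖d‖^2 - 2*⟪d, z - x⟫ + ‖z - x‖^2 :=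
        norm_sub_sq_real _ _
      rw [e1, e2, e3]; ring
    rw [hexp] at h1
    have hγ' : γ = 2*s/(1+s) := by
      rw [hγ, inv_eq_one_div, div_add' _ _ _ hspos.ne', div_div_eq_mul_div]
      ring_nf
    rw [ge_iff_le, hγ', div_mul_eq_mul_div, le_div_iff₀ (by linarith)]
    nlinarith
end

section
/- Let H be a real Hilbert space and L_i : H → H be α_i-relaxed cutters with α_i ∈ (0,2) for i = 1,…,m, with ⋂_i Fix L_i ≠ ∅. Then Fix(L_m ⋯ L_1) = ⋂_{i=1}^m Fix L_i, and for any convex combination with strictly positive weights ω_i > 0 summing to 1, Fix(Σ_i ω_i L_i) = ⋂_{i=1}^m Fix L_i. -/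
open RealInnerProductSpace

theorem fixed_point_sets_of_composition_and_convex_combination
    (H : Type*) [NormedAddCommGroup H] [InnerProductSpace ℝ H]
    (m : ℕ) (L : Fin m → H → H) (α : Fin m → ℝ)
    (hα : ∀ i, α i ∈ Set.Ioo (0 : ℝ) 2)
    (hcutter : ∀ i, ∀ x z, z ∈ Function.fixedPoints (L i) →
      α i * ⟪L i x - x, z - x⟫ ≥ ‖L i x - x‖ ^ 2)
    (hfix : (⋂ i, Function.fixedPoints (L i)).Nonempty)
    (ω : Fin m → ℝ) (hω : ∀ i, 0 < ω i) (hωsum : ∑ i, ω i = 1) :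
    Function.fixedPoints (fun x => Fin.foldl m (fun y i => L i y) x) =
        ⋂ i, Function.fixedPoints (L i) ∧
      Function.fixedPoints (fun x => ∑ i, ω i • L i x) =
        ⋂ i, Function.fixedPoints (L i) := by
  obtain ⟨z, hz⟩ := hfix
  have hzfix : ∀ i, L i z = z := fun i => Set.mem_iInter.mp hz i
  have cpos : ∀ i, (0:ℝ) < 2 / α i - 1 := by
    intro i
    have h := hα i
    have : (1:ℝ) < 2 / α i := (lt_div_iff₀ h.1).mpr (by linarith [h.2])
    linarith
  -- key quantitative inequality
  have key : ∀ (i : Fin m) (x : H),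
      ‖L i x - z‖ ^ 2 + (2 / α i - 1) * ‖L i x - x‖ ^ 2 ≤ ‖x - z‖ ^ 2 := by
    intro i x
    have h := hcutter i x z (hzfix i)
    have hpos : (0:ℝ) < α i := (hα i).1
    have expand : ‖L i x - z‖ ^ 2
        = ‖x - z‖ ^ 2 - 2 * ⟪L i x - x, z - x⟫ + ‖L i x - x‖ ^ 2 := by
      have hrw : L i x - z = (L i x - x) - (z - x) := by abel
      have hrw2 : x - z = -(z - x) := by abel
      rw [hrw, norm_sub_sq_real, hrw2, norm_neg]
      ring
    have h2 : 2 / α i * ‖L i x - x‖ ^ 2 ≤ 2 * ⟪L i x - x, z - x⟫ := by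
      rw [div_mul_eq_mul_div, div_le_iff₀ hpos]
      nlinarith [h]
    rw [expand]
    nlinarith [h2]
  have dec : ∀ i (x : H), ‖L i x - z‖ ≤ ‖x - z‖ := by
    intro i x
    have hk := key i x
    have h1 : ‖L i x - z‖ ^ 2 ≤ ‖x - z‖ ^ 2 := by
      nlinarith [cpos i, sq_nonneg ‖L i x - x‖, mul_nonneg (cpos i).le (sq_nonneg ‖L i x - x‖)]
    exact (pow_le_pow_iff_left₀ (norm_nonneg _) (norm_nonneg _) two_ne_zero).mp h1
  have eqfix : ∀ i (x : H), ‖x - z‖ ≤ ‖L i x - z‖ → L i x = x := by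
    intro i x hle
    have h1 : ‖x - z‖ ^ 2 ≤ ‖L i x - z‖ ^ 2 := pow_le_pow_left₀ (norm_nonneg _) hle 2
    have hk := key i x
    have h3 : ‖L i x - x‖ ^ 2 ≤ 0 := by
      nlinarith [cpos i, sq_nonneg ‖L i x - x‖]
    have h4 : ‖L i x - x‖ = 0 := by nlinarith [norm_nonneg (L i x - x)]
    exact sub_eq_zero.mp (norm_eq_zero.mp h4)
  -- list fold lemmas
  have ldec : ∀ (l : List (Fin m)) (x : H),
      ‖l.foldl (fun y i => L i y) x - z‖ ≤ ‖x - z‖ := by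
    intro l
    induction l with
    | nil => intro x; simp
    | cons i t ih =>
      intro x
      simpa using (ih (L i x)).trans (dec i x)
  have leq : ∀ (l : List (Fin m)) (x : H),
      ‖x - z‖ ≤ ‖l.foldl (fun y i => L i y) x - z‖ →
      l.foldl (fun y i => L i y) x = x ∧ ∀ i ∈ l, L i x = x := by
    intro l
    induction l with
    | nil => intro x _; simp
    | cons i t ih =>
      intro x hle
      simp only [List.foldl_cons] at hle ⊢
      have h1 : ‖t.foldl (fun y i => L i y) (L i x) - z‖ ≤ ‖L i x - z‖ := ldec t (L i x)
      have h2 : L i x = x := eqfix i x (by linarith [dec i x, ldec t (L i x), hle])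
      rw [h2] at hle ⊢
      obtain ⟨hf, hall⟩ := ih x hle
      exact ⟨hf, by simpa [h2] using hall⟩
  have lfix : ∀ (l : List (Fin m)) (x : H), (∀ i, L i x = x) →
      l.foldl (fun y i => L i y) x = x := by
    intro l x hx
    induction l with
    | nil => rfl
    | cons i t ih => simp [hx i, ih]
  constructor
  · ext x
    simp only [Function.fixedPoints, Function.IsFixedPt, Set.mem_setOf_eq,
      Set.mem_iInter, Fin.foldl_eq_foldl_finRange]
    constructor
    · intro hx i
      have := (leq (List.finRange m) x (by rw [hx])).2
      exact this i (List.mem_finRange i)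
    · intro hx
      exact lfix (List.finRange m) x hx
  · ext x
    simp only [Function.fixedPoints, Function.IsFixedPt, Set.mem_setOf_eq, Set.mem_iInter]
    constructor
    · intro hx i
      -- ∑ ω i • (L i x - x) = 0
      have hsum0 : ∑ j, ω j • (L j x - x) = 0 := by
        have : ∑ j, ω j • (L j x - x) = (∑ j, ω j • L j x) - (∑ j, ω j) • x := by
          rw [Finset.sum_smul]
          rw [← Finset.sum_sub_distrib]
          exact Finset.sum_congr rfl fun j _ => smul_sub _ _ _
        rw [this, hωsum, one_smul, hx, sub_self]
      have hinner0 : ∑ j, ω j * ⟪L j x - x, z - x⟫ = 0 := by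
        have := congrArg (fun v => ⟪v, z - x⟫) hsum0
        simpa [sum_inner, real_inner_smul_left] using this
      have hnn : ∀ j ∈ Finset.univ, 0 ≤ ω j * ⟪L j x - x, z - x⟫ := by
        intro j _
        have h := hcutter j x z (hzfix j)
        have hpos := (hα j).1
        have : 0 ≤ ⟪L j x - x, z - x⟫ := by
          nlinarith [sq_nonneg ‖L j x - x‖]
        exact mul_nonneg (hω j).le this
      have heach := (Finset.sum_eq_zero_iff_of_nonneg hnn).mp hinner0 i (Finset.mem_univ i)
      have hinnz : ⟪L i x - x, z - x⟫ = 0 := by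
        exact (mul_eq_zero.mp heach).resolve_left (hω i).ne'
      have h := hcutter i x z (hzfix i)
      rw [hinnz, mul_zero] at h
      have : ‖L i x - x‖ = 0 := by nlinarith [norm_nonneg (L i x - x)]
      exact sub_eq_zero.mp (norm_eq_zero.mp this)
    · intro hx
      have : ∀ j, ω j • L j x = ω j • x := fun j => by rw [hx j]
      simp only [this, ← Finset.sum_smul, hωsum, one_smul]
end

section
/- Let H be a real Hilbert space, T₁, T₂ : H → H be α₁- and α₂-relaxed cutters with α₁, α₂ ∈ (0,2) and Fix T₁ ∩ Fix T₂ ≠ ∅. Then for all x ∈ H and z ∈ Fix T₁ ∩ Fix T₂, setting y¹ = T₁(x) − x and y² = T₂T₁(x) − T₁(x), one has ⟨z − x, T₂T₁(x) − x⟩ ≥ (1/α₁ − 1/2)‖y¹‖² + (1/α₂ − 1/2)‖y²‖² + (1/2)‖y¹ + y²‖². -/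
open RealInnerProductSpace

theorem two_relaxed_cutters_estimate (H : Type*) [NormedAddCommGroup H]
    [InnerProductSpace ℝ H]
    (T₁ T₂ : H → H) (α₁ α₂ : ℝ)
    (hα₁ : α₁ ∈ Set.Ioo (0 : ℝ) 2) (hα₂ : α₂ ∈ Set.Ioo (0 : ℝ) 2)
    (hT₁ : ∀ x z, z ∈ Function.fixedPoints T₁ → α₁ * ⟪T₁ x - x, z - x⟫ ≥ ‖T₁ x - x‖ ^ 2)
    (hT₂ : ∀ x z, z ∈ Function.fixedPoints T₂ → α₂ * ⟪T₂ x - x, z - x⟫ ≥ ‖T₂ x - x‖ ^ 2)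
    (hfix : (Function.fixedPoints T₁ ∩ Function.fixedPoints T₂).Nonempty) :
    ∀ x z, z ∈ Function.fixedPoints T₁ ∩ Function.fixedPoints T₂ →
      ⟪z - x, T₂ (T₁ x) - x⟫ ≥
        (1 / α₁ - 1 / 2) * ‖T₁ x - x‖ ^ 2 +
          (1 / α₂ - 1 / 2) * ‖T₂ (T₁ x) - T₁ x‖ ^ 2 +
          (1 / 2) * ‖(T₁ x - x) + (T₂ (T₁ x) - T₁ x)‖ ^ 2 := by
  rintro x z ⟨hz₁, hz₂⟩
  obtain ⟨ha₁, ha₁'⟩ := hα₁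
  obtain ⟨ha₂, ha₂'⟩ := hα₂
  have h1 := hT₁ x z hz₁
  have h2 := hT₂ (T₁ x) z hz₂
  set a := T₁ x - x with ha
  set b := T₂ (T₁ x) - T₁ x with hb
  have hzT : z - T₁ x = (z - x) - a := by rw [ha]; abel
  have hTx : T₂ (T₁ x) - x = a + b := by rw [ha, hb]; abel
  rw [hzT] at h2
  rw [hTx]
  have hnorm : ‖a + b‖ ^ 2 = ‖a‖ ^ 2 + 2 * ⟪a, b⟫ + ‖b‖ ^ 2 := by
    rw [@norm_add_sq_real]
  have e2 : ⟪b, z - x - a⟫ = ⟪b, z - x⟫ - ⟪b, a⟫ := by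
    rw [inner_sub_right]
  have e3 : ⟪z - x, a + b⟫ = ⟪a, z - x⟫ + ⟪b, z - x⟫ := by
    rw [inner_add_right, real_inner_comm (z - x) a, real_inner_comm (z - x) b]
  have e4 : ⟪a, b⟫ = ⟪b, a⟫ := real_inner_comm b a
  rw [e2] at h2
  rw [e3, hnorm, e4]
  have k1 : ⟪a, z - x⟫ ≥ ‖a‖ ^ 2 / α₁ := by
    rw [ge_iff_le, div_le_iff₀ ha₁]; linarith [h1]
  have k2 : ⟪b, z - x⟫ - ⟪b, a⟫ ≥ ‖b‖ ^ 2 / α₂ := by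
    rw [ge_iff_le, div_le_iff₀ ha₂]; linarith [h2]
  have f1 : (1 / α₁) * ‖a‖ ^ 2 = ‖a‖ ^ 2 / α₁ := by ring
  have f2 : (1 / α₂) * ‖b‖ ^ 2 = ‖b‖ ^ 2 / α₂ := by ring
  nlinarith [k1, k2]
end

section
/- Let H be a real Hilbert space and T_i : H → H be α_i-relaxed cutters, α_i ∈ (0,2), i = 1,…,m, with ⋂_i Fix T_i ≠ ∅. For x ∈ H set u⁰ = x, uⁱ = T_i(u^{i−1}), yⁱ = uⁱ − u^{i−1}. Then for every z ∈ ⋂_i Fix T_i, ⟨z − x, T_m⋯T_1(x) − x⟩ ≥ Σ_{i=1}^m ⟨(1/α_i)yⁱ + Σ_{j=i+1}^m yʲ, yⁱ⟩ (with the empty sum convention Σ_{j=m+1}^m yʲ = 0). -/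
/-!
Write `yⁱ = uⁱ - uⁱ⁻¹`, so that `z - x = (z - uⁱ⁻¹) + Σ_{j<i} yʲ`. Pairing with `yⁱ` and summing over `i`
gives `⟪z - x, uᵐ - x⟫ = Σᵢ (⟪z - uⁱ⁻¹, yⁱ⟫ + Σ_{j<i} ⟪yʲ, yⁱ⟫)`. The cutter inequality for `Tᵢ` at
`uⁱ⁻¹` bounds `⟪z - uⁱ⁻¹, yⁱ⟫` below by `‖yⁱ‖² / αᵢ`, and exchanging the order of the double sum
turns `Σᵢ Σ_{j<i} ⟪yʲ, yⁱ⟫` into `Σᵢ ⟪Σ_{j>i} yʲ, yⁱ⟫`.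
-/

open Finset RealInnerProductSpace

theorem Fin.sum_Iio_sub {M : Type*} [AddCommGroup M] {n : ℕ} (a : Fin n) (f : Fin (n + 1) → M) :
    ∑ i ∈ Iio a, (f i.succ - f i.castSucc) = f a.castSucc - f 0 := by
  rcases n with _ | n
  · exact a.elim0
  induction a using Fin.cases with
  | zero => rw [Iio_eq_empty.2 fun _ _ ↦ Fin.zero_le _]; simp
  | succ b =>
    have hIio : Iio b.succ = Iic b.castSucc := by ext; simp [Fin.le_castSucc_iff]
    rw [← Fin.succ_castSucc, hIio, Fin.sum_Iic_sub]

theorem Fin.sum_univ_sub {M : Type*} [AddCommGroup M] {n : ℕ} (f : Fin (n + 1) → M) :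
    ∑ i : Fin n, (f i.succ - f i.castSucc) = f (Fin.last n) - f 0 := by
  rcases n with _ | n
  · simp
  · rw [← Iic_top, Fin.sum_Iic_sub, Fin.top_eq_last, Fin.succ_last]

theorem Finset.sum_sum_Ioi_eq_sum_sum_Iio {ι M : Type*} [LinearOrder ι] [Fintype ι]
    [LocallyFiniteOrderTop ι] [LocallyFiniteOrderBot ι] [AddCommMonoid M] (f : ι → ι → M) :
    ∑ i, ∑ j ∈ Ioi i, f i j = ∑ j, ∑ i ∈ Iio j, f i j :=
  sum_comm' (by simp)

section InnerProductSpace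

variable {H : Type*} [NormedAddCommGroup H] [InnerProductSpace ℝ H]

def IsRelaxedCutter (α : ℝ) (T : H → H) : Prop :=
  ∀ x z, z ∈ Function.fixedPoints T → α * ⟪T x - x, z - x⟫ ≥ ‖T x - x‖ ^ 2

theorem IsRelaxedCutter.inv_mul_norm_sq_le_inner {α : ℝ} {T : H → H} (hT : IsRelaxedCutter α T)
    (hα : 0 < α) (x : H) {z : H} (hz : z ∈ Function.fixedPoints T) :
    α⁻¹ * ‖T x - x‖ ^ 2 ≤ ⟪z - x, T x - x⟫ := by
  rw [inv_mul_le_iff₀ hα, real_inner_comm]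
  exact hT x z hz

theorem inner_sub_zero_last_sub_zero_eq_sum {m : ℕ} (u : Fin (m + 1) → H) (z : H) :
    ⟪z - u 0, u (Fin.last m) - u 0⟫ =
      ∑ i : Fin m, (⟪z - u i.castSucc, u i.succ - u i.castSucc⟫ +
        ⟪∑ j ∈ Iio i, (u j.succ - u j.castSucc), u i.succ - u i.castSucc⟫) := by
  rw [← Fin.sum_univ_sub, inner_sum]
  refine sum_congr rfl fun i _ ↦ ?_
  rw [← inner_add_left, Fin.sum_Iio_sub, sub_add_sub_cancel]

theorem sum_inner_smul_add_sum_Ioi {ι : Type*} [LinearOrder ι] [Fintype ι]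
    [LocallyFiniteOrderTop ι] [LocallyFiniteOrderBot ι] (a : ι → ℝ) (y : ι → H) :
    ∑ i, ⟪a i • y i + ∑ j ∈ Ioi i, y j, y i⟫ =
      ∑ i, (a i * ‖y i‖ ^ 2 + ⟪∑ j ∈ Iio i, y j, y i⟫) := by
  simp only [inner_add_left, real_inner_smul_left, real_inner_self_eq_norm_sq, sum_inner,
    sum_add_distrib]
  rw [sum_sum_Ioi_eq_sum_sum_Iio fun i j ↦ ⟪y j, y i⟫]
  exact congrArg _ <| sum_congr rfl fun j _ ↦ sum_congr rfl fun i _ ↦ real_inner_comm _ _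

end InnerProductSpace

theorem string_estimate_general (H : Type*) [NormedAddCommGroup H] [InnerProductSpace ℝ H]
    (m : ℕ) (T : Fin m → H → H) (α : Fin m → ℝ)
    (hα : ∀ i, α i ∈ Set.Ioo (0 : ℝ) 2)
    (hcutter : ∀ i, ∀ x z, z ∈ Function.fixedPoints (T i) →
      α i * ⟪T i x - x, z - x⟫ ≥ ‖T i x - x‖ ^ 2)
    (x : H) (u : Fin (m + 1) → H) (y : Fin m → H)
    (hu0 : u 0 = x)
    (hu : ∀ i : Fin m, u i.succ = T i (u i.castSucc))
    (hy : ∀ i : Fin m, y i = u i.succ - u i.castSucc) :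
    ∀ z, z ∈ ⋂ i, Function.fixedPoints (T i) →
      ⟪z - x, u (Fin.last m) - x⟫ ≥
        ∑ i, ⟪(1 / α i) • y i + ∑ j ∈ Finset.Ioi i, y j, y i⟫ := by
  intro z hz
  subst hu0
  obtain rfl : y = fun i ↦ u i.succ - u i.castSucc := funext hy
  rw [sum_inner_smul_add_sum_Ioi, inner_sub_zero_last_sub_zero_eq_sum]
  gcongr with i
  rw [one_div, hu i]
  exact IsRelaxedCutter.inv_mul_norm_sq_le_inner (hcutter i) (hα i).1 _ (Set.mem_iInter.1 hz i)

theorem string_estimate (H : Type*) [NormedAddCommGroup H] [InnerProductSpace ℝ H]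
    (m : ℕ) (T : Fin m → H → H) (α : Fin m → ℝ)
    (hα : ∀ i, α i ∈ Set.Ioo (0 : ℝ) 2)
    (hcutter : ∀ i, ∀ x z, z ∈ Function.fixedPoints (T i) →
      α i * ⟪T i x - x, z - x⟫ ≥ ‖T i x - x‖ ^ 2)
    (hfix : (⋂ i, Function.fixedPoints (T i)).Nonempty)
    (x : H) (u : Fin (m + 1) → H) (y : Fin m → H)
    (hu0 : u 0 = x)
    (hu : ∀ i : Fin m, u i.succ = T i (u i.castSucc))
    (hy : ∀ i : Fin m, y i = u i.succ - u i.castSucc) :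
    ∀ z, z ∈ ⋂ i, Function.fixedPoints (T i) →
      ⟪z - x, u (Fin.last m) - x⟫ ≥
        ∑ i, ⟪(1 / α i) • y i + ∑ j ∈ Finset.Ioi i, y j, y i⟫ :=
  string_estimate_general H m T α hα hcutter x u y hu0 hu hy
end

section
/- Let H be a real Hilbert space and, for t = 1,…,E, let U_t = T_{m_t}^{(t)} ⋯ T_1^{(t)} be compositions of α-relaxed cutters with all relaxation parameters in (0,2) and with a nonempty common fixed point set F = ⋂_{t,i} Fix T_i^{(t)}. Let T = Σ_t ω_t U_t with ω_t > 0, Σ_t ω_t = 1. Then for all x ∈ H and z ∈ F, ⟨z − x, T(x) − x⟩ ≥ (1/m̄)(1/γ − 1/2)‖T(x) − x‖², where γ is the maximum of all relaxation parameters and m̄ = max_t m_t. -/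
open RealInnerProductSpace

/-- Single relaxed-cutter step estimate (Fejér type). -/
lemma cutter_step_est {H : Type*} [NormedAddCommGroup H] [InnerProductSpace ℝ H]
    (γ a : ℝ) (ha0 : 0 < a) (haγ : a ≤ γ) (z y u : H)
    (h : a * ⟪u - y, z - y⟫ ≥ ‖u - y‖ ^ 2) :
    ‖z - u‖ ^ 2 ≤ ‖z - y‖ ^ 2 - (2 / γ - 1) * ‖u - y‖ ^ 2 := by
  have hγ0 : 0 < γ := lt_of_lt_of_le ha0 haγ
  have h1 : ‖u - y‖ ^ 2 / a ≤ ⟪u - y, z - y⟫ := by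
    rw [div_le_iff₀ ha0]; linarith [h]
  have h2 : ‖u - y‖ ^ 2 / γ ≤ ‖u - y‖ ^ 2 / a :=
    div_le_div_of_nonneg_left (sq_nonneg _) ha0 haγ
  have hexp : ‖z - u‖ ^ 2 = ‖z - y‖ ^ 2 - 2 * ⟪z - y, u - y⟫ + ‖u - y‖ ^ 2 := by
    have hh : z - u = (z - y) - (u - y) := by abel
    rw [hh, norm_sub_sq_real]
  have hsymm : ⟪z - y, u - y⟫ = ⟪u - y, z - y⟫ := real_inner_comm _ _
  have hring : (2 / γ - 1) * ‖u - y‖ ^ 2 = 2 * (‖u - y‖ ^ 2 / γ) - ‖u - y‖ ^ 2 := by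
    ring
  linarith

/-- Key string estimate by induction on the string length. -/
lemma string_fold_est {H : Type*} [NormedAddCommGroup H] [InnerProductSpace ℝ H]
    (γ : ℝ) :
    ∀ (n : ℕ) (g : Fin n → H → H) (a : Fin n → ℝ),
    (∀ i, 0 < a i) → (∀ i, a i ≤ γ) →
    ∀ (z : H), (∀ i y, a i * ⟪g i y - y, z - y⟫ ≥ ‖g i y - y‖ ^ 2) →
    ∀ x : H, ∃ S : ℝ, 0 ≤ S ∧
      ‖Fin.foldl n (fun y i => g i y) x - x‖ ^ 2 ≤ (n : ℝ) * S ∧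
      ‖z - Fin.foldl n (fun y i => g i y) x‖ ^ 2 ≤ ‖z - x‖ ^ 2 - (2 / γ - 1) * S := by
  intro n
  induction n with
  | zero =>
    intro g a _ _ z _ x
    exact ⟨0, le_refl 0, by simp, by simp⟩
  | succ n ih =>
    intro g a ha0 haγ z hc x
    obtain ⟨S, hS0, h1, h2⟩ := ih (fun i => g i.castSucc) (fun i => a i.castSucc)
      (fun i => ha0 _) (fun i => haγ _) z (fun i y => hc _ y) x
    set y := Fin.foldl n (fun y (i : Fin n) => g i.castSucc y) x with hy
    have hfold : Fin.foldl (n + 1) (fun y i => g i y) x = g (Fin.last n) y := by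
      rw [Fin.foldl_succ_last]
    set u := g (Fin.last n) y with hu
    have hstep : ‖z - u‖ ^ 2 ≤ ‖z - y‖ ^ 2 - (2 / γ - 1) * ‖u - y‖ ^ 2 :=
      cutter_step_est γ (a (Fin.last n)) (ha0 _) (haγ _) z y u (hc (Fin.last n) y)
    refine ⟨S + ‖u - y‖ ^ 2, by positivity, ?_, ?_⟩
    · rw [hfold]
      have htri : ‖u - x‖ ≤ ‖u - y‖ + ‖y - x‖ := by
        have hh : u - x = (u - y) + (y - x) := by abel
        rw [hh]; exact norm_add_le _ _
      have hb0 : (0:ℝ) ≤ ‖u - y‖ := norm_nonneg _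
      have ha0' : (0:ℝ) ≤ ‖y - x‖ := norm_nonneg _
      have hn0 : (0:ℝ) ≤ (n:ℝ) := Nat.cast_nonneg n
      have hsq : ‖u - x‖ ^ 2 ≤ (‖u - y‖ + ‖y - x‖) ^ 2 :=
        pow_le_pow_left₀ (norm_nonneg _) htri 2
      push_cast
      rcases Nat.eq_zero_or_pos n with hn | hn
      · have h1' : ‖y - x‖ ^ 2 ≤ 0 := by
          rw [hn] at h1; simpa using h1
        have hax : ‖y - x‖ = 0 := by nlinarith [sq_nonneg ‖y - x‖]
        rw [hax, add_zero] at hsq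
        simp only [hn, Nat.cast_zero]
        nlinarith [hsq, hS0]
      · have hnR : (0:ℝ) < (n:ℝ) := by exact_mod_cast hn
        have key : (n:ℝ) * ((‖u - y‖ + ‖y - x‖) ^ 2)
            ≤ (n:ℝ) * (((n:ℝ) + 1) * (S + ‖u - y‖ ^ 2)) := by
          nlinarith [sq_nonneg ((n:ℝ) * ‖u - y‖ - ‖y - x‖), h1,
            mul_le_mul_of_nonneg_left h1 hn0]
        have key2 : (‖u - y‖ + ‖y - x‖) ^ 2 ≤ ((n:ℝ) + 1) * (S + ‖u - y‖ ^ 2) :=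
          le_of_mul_le_mul_left key hnR
        linarith
    · rw [hfold]
      calc ‖z - u‖ ^ 2 ≤ ‖z - y‖ ^ 2 - (2 / γ - 1) * ‖u - y‖ ^ 2 := hstep
        _ ≤ (‖z - x‖ ^ 2 - (2 / γ - 1) * S) - (2 / γ - 1) * ‖u - y‖ ^ 2 := by linarith
        _ = ‖z - x‖ ^ 2 - (2 / γ - 1) * (S + ‖u - y‖ ^ 2) := by ring

theorem string_averaging_estimate (H : Type*) [NormedAddCommGroup H]
    [InnerProductSpace ℝ H]
    (E : ℕ) (m : Fin E → ℕ)
    (T' : ∀ t : Fin E, Fin (m t) → H → H)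
    (α : ∀ t : Fin E, Fin (m t) → ℝ)
    (hα : ∀ t i, α t i ∈ Set.Ioo (0 : ℝ) 2)
    (hcutter : ∀ t i, ∀ x z, z ∈ Function.fixedPoints (T' t i) →
      α t i * ⟪T' t i x - x, z - x⟫ ≥ ‖T' t i x - x‖ ^ 2)
    (F : Set H) (hF : F = ⋂ t, ⋂ i, Function.fixedPoints (T' t i)) (hFne : F.Nonempty)
    (ω : Fin E → ℝ) (hω : ∀ t, 0 < ω t) (hωsum : ∑ t, ω t = 1)
    (U : Fin E → H → H) (hU : ∀ t, U t = fun x => Fin.foldl (m t) (fun y i => T' t i y) x)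
    (T : H → H) (hT : T = fun x => ∑ t, ω t • U t x)
    (γ : ℝ) (hγub : ∀ t i, α t i ≤ γ) (hγmem : ∃ t i, α t i = γ)
    (mbar : ℕ) (hmub : ∀ t, m t ≤ mbar) (hmmem : ∃ t, m t = mbar) :
    ∀ x, ∀ z ∈ F, ⟪z - x, T x - x⟫ ≥
      (1 / (mbar : ℝ)) * (1 / γ - 1 / 2) * ‖T x - x‖ ^ 2 := by
  obtain ⟨t0, i0, hti⟩ := hγmem
  have hγ0 : 0 < γ := hti ▸ (hα t0 i0).1
  have hγ2 : γ < 2 := hti ▸ (hα t0 i0).2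
  have hmbar : 0 < mbar := lt_of_lt_of_le i0.pos (hmub t0)
  have hmbarR : (0 : ℝ) < (mbar : ℝ) := by exact_mod_cast hmbar
  have hhalf : (1 : ℝ) / 2 ≤ 1 / γ := one_div_le_one_div_of_le hγ0 hγ2.le
  have hc0 : 0 ≤ (1 / (mbar : ℝ)) * (1 / γ - 1 / 2) :=
    mul_nonneg (by positivity) (by linarith)
  intro x z hz
  rw [hF] at hz
  simp only [Set.mem_iInter] at hz
  have hzfix : ∀ t i, z ∈ Function.fixedPoints (T' t i) := fun t i => hz t i
  set c : ℝ := (1 / (mbar : ℝ)) * (1 / γ - 1 / 2) with hc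
  -- per string estimate
  have hUt : ∀ t, ⟪z - x, U t x - x⟫ ≥ c * ‖U t x - x‖ ^ 2 := by
    intro t
    obtain ⟨S, hS0, h1, h2⟩ := string_fold_est γ (m t) (T' t) (α t)
      (fun i => (hα t i).1) (fun i => hγub t i) z
      (fun i y => hcutter t i y z (hzfix t i)) x
    rw [hU t] at *
    set u : H := Fin.foldl (m t) (fun y i => T' t i y) x with hudef
    have hid : ⟪z - x, u - x⟫ = (‖z - x‖ ^ 2 + ‖u - x‖ ^ 2 - ‖z - u‖ ^ 2) / 2 := by
      have hh : z - u = (z - x) - (u - x) := by abel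
      have := norm_sub_sq_real (z - x) (u - x)
      rw [← hh] at this
      linarith
    have hmle : (m t : ℝ) ≤ (mbar : ℝ) := by exact_mod_cast hmub t
    have hm : ‖u - x‖ ^ 2 ≤ (mbar : ℝ) * S :=
      h1.trans (mul_le_mul_of_nonneg_right hmle hS0)
    have h3 : ‖u - x‖ ^ 2 / (mbar : ℝ) ≤ S := by
      rw [div_le_iff₀ hmbarR]; linarith
    have h4 : (1 / γ - 1 / 2) * (‖u - x‖ ^ 2 / (mbar : ℝ)) ≤ (1 / γ - 1 / 2) * S :=
      mul_le_mul_of_nonneg_left h3 (by linarith)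
    have h5 : c * ‖u - x‖ ^ 2 = (1 / γ - 1 / 2) * (‖u - x‖ ^ 2 / (mbar : ℝ)) := by
      rw [hc]; ring
    have h6 : (2 / γ - 1) * S = 2 * ((1 / γ - 1 / 2) * S) := by ring
    nlinarith [sq_nonneg ‖u - x‖]
  -- combination
  have hTx : T x - x = ∑ t, ω t • (U t x - x) := by
    have hsum : ∑ t, ω t • (U t x - x) = (∑ t, ω t • U t x) - x := by
      simp only [smul_sub]
      rw [Finset.sum_sub_distrib, ← Finset.sum_smul, hωsum, one_smul]
    rw [hT]; exact hsum.symm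
  have hinner : ⟪z - x, T x - x⟫ = ∑ t, ω t * ⟪z - x, U t x - x⟫ := by
    rw [hTx, inner_sum]
    congr 1; ext t; rw [real_inner_smul_right]
  have hsum1 : ∑ t, ω t * ⟪z - x, U t x - x⟫ ≥ ∑ t, ω t * (c * ‖U t x - x‖ ^ 2) :=
    Finset.sum_le_sum fun t _ => mul_le_mul_of_nonneg_left (hUt t) (hω t).le
  -- Jensen: ‖∑ ω • v‖² ≤ ∑ ω ‖v‖²
  have hjensen : ‖T x - x‖ ^ 2 ≤ ∑ t, ω t * ‖U t x - x‖ ^ 2 := by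
    have htri : ‖T x - x‖ ≤ ∑ t, ω t * ‖U t x - x‖ := by
      rw [hTx]
      refine (norm_sum_le _ _).trans (le_of_eq ?_)
      refine Finset.sum_congr rfl fun t _ => ?_
      rw [norm_smul, Real.norm_eq_abs, abs_of_pos (hω t)]
    have hcs : (∑ t, ω t * ‖U t x - x‖) ^ 2 ≤ ∑ t, ω t * ‖U t x - x‖ ^ 2 := by
      have := Finset.sum_mul_sq_le_sq_mul_sq Finset.univ
        (fun t => Real.sqrt (ω t)) (fun t => Real.sqrt (ω t) * ‖U t x - x‖)
      have e1 : ∀ t : Fin E, Real.sqrt (ω t) * (Real.sqrt (ω t) * ‖U t x - x‖)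
          = ω t * ‖U t x - x‖ := fun t => by
        rw [← mul_assoc, Real.mul_self_sqrt (hω t).le]
      have e2 : ∀ t : Fin E, Real.sqrt (ω t) ^ 2 = ω t := fun t =>
        Real.sq_sqrt (hω t).le
      have e3 : ∀ t : Fin E, (Real.sqrt (ω t) * ‖U t x - x‖) ^ 2
          = ω t * ‖U t x - x‖ ^ 2 := fun t => by
        rw [mul_pow, Real.sq_sqrt (hω t).le]
      simp only [e1, e2, e3] at this
      rwa [hωsum, one_mul] at this
    have hnn : (0:ℝ) ≤ ∑ t, ω t * ‖U t x - x‖ :=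
      Finset.sum_nonneg fun t _ => mul_nonneg (hω t).le (norm_nonneg _)
    calc ‖T x - x‖ ^ 2 ≤ (∑ t, ω t * ‖U t x - x‖) ^ 2 := by
          apply pow_le_pow_left₀ (norm_nonneg _) htri
      _ ≤ ∑ t, ω t * ‖U t x - x‖ ^ 2 := hcs
  have hfin : ∑ t, ω t * (c * ‖U t x - x‖ ^ 2) = c * ∑ t, ω t * ‖U t x - x‖ ^ 2 := by
    rw [Finset.mul_sum]; congr 1; ext t; ring
  have : ⟪z - x, T x - x⟫ ≥ c * ∑ t, ω t * ‖U t x - x‖ ^ 2 := by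
    rw [hinner, ← hfin]; exact hsum1
  calc ⟪z - x, T x - x⟫ ≥ c * ∑ t, ω t * ‖U t x - x‖ ^ 2 := this
    _ ≥ c * ‖T x - x‖ ^ 2 := mul_le_mul_of_nonneg_left hjensen hc0
end

section
/- Let H be a real Hilbert space and T : H → H with Fix T ≠ ∅. Suppose σ : H → (0,∞) and λ_k ∈ [ε, 2 − ε] (ε ∈ (0,1)) are such that for all k, σ(x)‖T(x) − x‖² ≤ ⟨z − x, T(x) − x⟩ for x ∉ Fix T and z ∈ Fix T, and σ is bounded below by c > 0. Then the sequence x^{k+1} = x^k + λ_k σ(x^k)(T(x^k) − x^k) satisfies: ‖x^k − z‖ is nonincreasing for every z ∈ Fix T, and ‖T(x^k) − x^k‖ → 0. -/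
open RealInnerProductSpace Filter

theorem fejer_monotone_and_asymptotic_regularity (H : Type*) [NormedAddCommGroup H]
    [InnerProductSpace ℝ H]
    (T : H → H) (hfix : (Function.fixedPoints T).Nonempty)
    (σ : H → ℝ) (c : ℝ) (hc : 0 < c) (hσc : ∀ x, c ≤ σ x)
    (hstep : ∀ x, x ∉ Function.fixedPoints T → ∀ z ∈ Function.fixedPoints T,
      σ x * ‖T x - x‖ ^ 2 ≤ ⟪z - x, T x - x⟫)
    (ε : ℝ) (hε : ε ∈ Set.Ioo (0 : ℝ) 1)
    (lam : ℕ → ℝ) (hlam : ∀ k, lam k ∈ Set.Icc ε (2 - ε))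
    (x : ℕ → H)
    (hx : ∀ k, x (k + 1) = x k + (lam k * σ (x k)) • (T (x k) - x k)) :
    (∀ z ∈ Function.fixedPoints T, Antitone fun k => ‖x k - z‖) ∧
      Tendsto (fun k => ‖T (x k) - x k‖) atTop (nhds 0) := by
  obtain ⟨hε0, hε1⟩ := hε
  have key : ∀ z ∈ Function.fixedPoints T, ∀ k,
      ‖x (k+1) - z‖^2 ≤ ‖x k - z‖^2 - (ε^2 * c^2) * ‖T (x k) - x k‖^2 := by
    intro z hz k
    obtain ⟨hl1, hl2⟩ := hlam k
    by_cases hd0 : T (x k) - x k = 0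
    · simp [hx k, hd0]
    · have hnf : x k ∉ Function.fixedPoints T := by
        intro h
        exact hd0 (by simp [Function.IsFixedPt] at h; rw [h, sub_self])
      have hs := hstep (x k) hnf z hz
      set d := T (x k) - x k with hd
      have hexp : ‖x (k+1) - z‖^2
          = ‖x k - z‖^2 + 2 * ((lam k * σ (x k)) * ⟪x k - z, d⟫)
            + (lam k * σ (x k))^2 * ‖d‖^2 := by
        have h1 : x (k+1) - z = (x k - z) + (lam k * σ (x k)) • d := by
          rw [hx k]; abel
        rw [h1, norm_add_sq_real, real_inner_smul_right, norm_smul,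
          Real.norm_eq_abs, mul_pow, sq_abs]
      have hip : ⟪x k - z, d⟫ ≤ -(σ (x k) * ‖d‖^2) := by
        have heq : ⟪z - x k, d⟫ = -⟪x k - z, d⟫ := by
          rw [show z - x k = -(x k - z) by abel, inner_neg_left]
        rw [heq] at hs
        linarith
      have hσ := hσc (x k)
      have hσ0 : (0:ℝ) < σ (x k) := lt_of_lt_of_le hc hσ
      have hlam0 : (0:ℝ) < lam k := lt_of_lt_of_le hε0 hl1
      have hdn : (0:ℝ) ≤ ‖d‖^2 := sq_nonneg _
      rw [hexp]
      have ht0 : (0:ℝ) ≤ lam k * σ (x k) := le_of_lt (mul_pos hlam0 hσ0)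
      have h2 : (lam k * σ (x k)) * ⟪x k - z, d⟫
          ≤ (lam k * σ (x k)) * (-(σ (x k) * ‖d‖^2)) :=
        mul_le_mul_of_nonneg_left hip ht0
      have h3 : ε^2 * c^2 ≤ (lam k * (2 - lam k)) * (σ (x k))^2 := by
        have hεε : ε^2 ≤ lam k * (2 - lam k) := by nlinarith
        have hcc : c^2 ≤ (σ (x k))^2 := by nlinarith
        nlinarith
      nlinarith [h2, mul_le_mul_of_nonneg_right h3 hdn]
  constructor
  · intro z hz
    apply antitone_nat_of_succ_le
    intro k
    show ‖x (k+1) - z‖ ≤ ‖x k - z‖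
    have h := key z hz k
    have hnn : (0:ℝ) ≤ (ε^2 * c^2) * ‖T (x k) - x k‖^2 := by positivity
    nlinarith [norm_nonneg (x (k+1) - z), norm_nonneg (x k - z)]
  · obtain ⟨z, hz⟩ := hfix
    set a : ℕ → ℝ := fun k => ‖x k - z‖^2 with ha
    have hanti : Antitone a := by
      apply antitone_nat_of_succ_le
      intro k
      show ‖x (k+1) - z‖^2 ≤ ‖x k - z‖^2
      have h := key z hz k
      have hnn : (0:ℝ) ≤ (ε^2 * c^2) * ‖T (x k) - x k‖^2 := by positivity
      linarith
    have hbdd : BddBelow (Set.range a) := ⟨0, by rintro _ ⟨k, rfl⟩; exact sq_nonneg _⟩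
    have hconv : Tendsto a atTop (nhds (⨅ k, a k)) :=
      tendsto_atTop_ciInf hanti hbdd
    have hconv' : Tendsto (fun k => a (k+1)) atTop (nhds (⨅ k, a k)) :=
      hconv.comp (tendsto_add_atTop_nat 1)
    have hdiff : Tendsto (fun k => a k - a (k+1)) atTop (nhds 0) := by
      have h := hconv.sub hconv'
      rw [sub_self] at h
      exact h
    have hC : (0:ℝ) < ε^2 * c^2 := by positivity
    have hsq : Tendsto (fun k => ‖T (x k) - x k‖^2) atTop (nhds 0) := by
      have hb : Tendsto (fun k => (ε^2 * c^2) * ‖T (x k) - x k‖^2) atTop (nhds 0) := by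
        apply squeeze_zero
        · intro k; positivity
        · intro k
          have h := key z hz k
          show (ε^2 * c^2) * ‖T (x k) - x k‖^2 ≤ ‖x k - z‖^2 - ‖x (k+1) - z‖^2
          linarith
        · exact hdiff
      have h := hb.const_mul (ε^2 * c^2)⁻¹
      rw [mul_zero] at h
      convert h using 2 with k
      field_simp
    have h := hsq.sqrt
    rw [Real.sqrt_zero] at h
    convert h using 2 with k
    rw [Real.sqrt_sq (norm_nonneg _)]
end

section
/- Let H be a real Hilbert space and T : H → H with Fix T ≠ ∅ such that for all x ∉ Fix T, z ∈ Fix T: ⟨z − x, T(x) − x⟩ ≥ κ‖T(x) − x‖² for some constant κ > 1/2, and T − Id is demi-closed at 0. Let λ_k ∈ [ε, 2 − ε] with ε ∈ (0,1), and define x^{k+1} = x^k + λ_k σ_max(x^k)(T(x^k) − x^k), where σ_max(x) is a quantity independent of z which satisfies κ ≤ σ_max(x) and σ_max(x)‖T(x)−x‖² ≤ ⟨z − x, T(x) − x⟩ for all z ∈ Fix T. Then x^k converges weakly to a point of Fix T. -/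
open RealInnerProductSpace Filter


theorem weak_seq_compact (H : Type*) [NormedAddCommGroup H] [InnerProductSpace ℝ H]
    [CompleteSpace H] (x : ℕ → H) (C : ℝ) (hC : ∀ k, ‖x k‖ ≤ C) :
    ∃ xs : H, ∃ φ : ℕ → ℕ, StrictMono φ ∧
      ∀ v : H, Tendsto (fun k => ⟪x (φ k), v⟫) atTop (nhds ⟪xs, v⟫) := by
  have hC0 : 0 ≤ C := (norm_nonneg (x 0)).trans (hC 0)
  -- diagonal extraction via compactness of [−C²,C²]^ℕ
  have hcomp : IsCompact (Set.pi Set.univ fun _ : ℕ => Set.Icc (-(C^2)) (C^2)) :=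
    isCompact_univ_pi fun _ => isCompact_Icc
  have hmem : ∀ k, (fun j => ⟪x k, x j⟫) ∈ Set.pi Set.univ fun _ : ℕ => Set.Icc (-(C^2)) (C^2) := by
    intro k j _
    have h1 : |⟪x k, x j⟫| ≤ ‖x k‖ * ‖x j‖ := abs_real_inner_le_norm _ _
    have h2 : ‖x k‖ * ‖x j‖ ≤ C^2 := by
      have := hC k; have := hC j; nlinarith [norm_nonneg (x k), norm_nonneg (x j)]
    constructor <;> [linarith [neg_abs_le ⟪x k, x j⟫]; linarith [le_abs_self ⟪x k, x j⟫]]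
  obtain ⟨g, -, φ, hφ, hg⟩ := hcomp.tendsto_subseq hmem
  have hgj : ∀ j, Tendsto (fun k => ⟪x (φ k), x j⟫) atTop (nhds (g j)) := by
    intro j
    exact (tendsto_pi_nhds.mp hg j)
  set y : ℕ → H := fun k => x (φ k) with hy
  -- all inner products along the subsequence are Cauchy
  have hspan : ∀ v ∈ Submodule.span ℝ (Set.range x),
      ∃ L, Tendsto (fun k => ⟪y k, v⟫) atTop (nhds L) := by
    intro v hv
    induction hv using Submodule.span_induction with
    | mem w hw => obtain ⟨j, rfl⟩ := hw; exact ⟨g j, hgj j⟩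
    | zero => exact ⟨0, by simpa using tendsto_const_nhds⟩
    | add a b _ _ ha hb =>
      obtain ⟨La, hLa⟩ := ha; obtain ⟨Lb, hLb⟩ := hb
      exact ⟨La + Lb, by simpa [inner_add_right] using hLa.add hLb⟩
    | smul c a _ ha =>
      obtain ⟨La, hLa⟩ := ha
      exact ⟨c * La, by simpa [inner_smul_right] using hLa.const_mul c⟩
  have hyC : ∀ k, ‖y k‖ ≤ C := fun k => hC (φ k)
  have hcauchy_closure : ∀ w ∈ (Submodule.span ℝ (Set.range x)).topologicalClosure,
      CauchySeq (fun k => ⟪y k, w⟫) := by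
    intro w hw
    rw [Metric.cauchySeq_iff]
    intro η hη
    have hmem' : w ∈ closure (Submodule.span ℝ (Set.range x) : Set H) := hw
    obtain ⟨v, hv, hvw⟩ := Metric.mem_closure_iff.mp hmem' (η / (4 * C + 1))
      (by positivity)
    obtain ⟨L, hL⟩ := hspan v hv
    have hc : CauchySeq (fun k => ⟪y k, v⟫) := hL.cauchySeq
    rw [Metric.cauchySeq_iff] at hc
    obtain ⟨N, hN⟩ := hc (η / 2) (by linarith)
    refine ⟨N, fun m hm n hn => ?_⟩
    have key : ∀ k, |⟪y k, w⟫ - ⟪y k, v⟫| ≤ C * (η / (4 * C + 1)) := by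
      intro k
      have : ⟪y k, w⟫ - ⟪y k, v⟫ = ⟪y k, w - v⟫ := by rw [inner_sub_right]
      rw [this]
      calc |⟪y k, w - v⟫| ≤ ‖y k‖ * ‖w - v‖ := abs_real_inner_le_norm _ _
        _ ≤ C * (η / (4 * C + 1)) := by
            have h1 := hyC k
            have h2 : ‖w - v‖ ≤ η / (4 * C + 1) := by
              rw [← dist_eq_norm]; exact le_of_lt hvw
            exact mul_le_mul h1 h2 (norm_nonneg _) hC0
    have hCq : C * (η / (4 * C + 1)) ≤ η / 4 := by
      rw [mul_div_assoc', div_le_div_iff₀ (by linarith) (by norm_num)]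
      nlinarith
    have h3 := hN m hm n hn
    rw [Real.dist_eq] at h3 ⊢
    have k1 := key m; have k2 := key n
    calc |⟪y m, w⟫ - ⟪y n, w⟫|
        ≤ |⟪y m, w⟫ - ⟪y m, v⟫| + |⟪y m, v⟫ - ⟪y n, v⟫| + |⟪y n, v⟫ - ⟪y n, w⟫| := by
          have := abs_sub_le (⟪y m, w⟫) (⟪y m, v⟫) (⟪y n, w⟫)
          have := abs_sub_le (⟪y m, v⟫) (⟪y n, v⟫) (⟪y n, w⟫)
          linarith
      _ < η := by
          rw [abs_sub_comm (⟪y n, v⟫)] at *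
          linarith [k1, k2, h3, abs_sub_comm (⟪y n, w⟫) (⟪y n, v⟫)]
  -- reduce arbitrary v to the closure via orthogonal projection
  set M : Submodule ℝ H := (Submodule.span ℝ (Set.range x)).topologicalClosure with hM
  haveI : CompleteSpace M :=
    (Submodule.isClosed_topologicalClosure _).completeSpace_coe
  have hxM : ∀ k, y k ∈ M := fun k =>
    Submodule.le_topologicalClosure _ (Submodule.subset_span ⟨φ k, rfl⟩)
  have hred : ∀ v : H, ∀ k, ⟪y k, v⟫ = ⟪y k, (M.orthogonalProjectionOnto v : H)⟫ := by
    intro v k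
    have horth : v - (M.orthogonalProjectionOnto v : H) ∈ Mᗮ :=
      by rw [Submodule.coe_orthogonalProjectionOnto_apply]; exact Submodule.sub_starProjection_mem_orthogonal v
    have h0 : ⟪y k, v - (M.orthogonalProjectionOnto v : H)⟫ = 0 :=
      (Submodule.mem_orthogonal M _).mp horth (y k) (hxM k)
    have := inner_sub_right (𝕜 := ℝ) (y k) v (M.orthogonalProjectionOnto v : H)
    linarith [this, h0]
  have hconv : ∀ v : H, ∃ L, Tendsto (fun k => ⟪y k, v⟫) atTop (nhds L) := by
    intro v
    have hc : CauchySeq (fun k => ⟪y k, (M.orthogonalProjectionOnto v : H)⟫) :=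
      hcauchy_closure _ (M.orthogonalProjectionOnto v).2
    obtain ⟨L, hL⟩ := cauchySeq_tendsto_of_complete hc
    exact ⟨L, by simpa only [← hred v] using hL⟩
  -- build the limit functional and apply Riesz
  choose L hL using hconv
  have hLadd : ∀ a b, L (a + b) = L a + L b := by
    intro a b
    refine tendsto_nhds_unique (hL (a + b)) ?_
    simpa [inner_add_right] using (hL a).add (hL b)
  have hLsmul : ∀ (c : ℝ) a, L (c • a) = c * L a := by
    intro c a
    refine tendsto_nhds_unique (hL (c • a)) ?_
    simpa [inner_smul_right] using (hL a).const_mul c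
  have hLbound : ∀ v, |L v| ≤ C * ‖v‖ := by
    intro v
    have h1 : Tendsto (fun k => |⟪y k, v⟫|) atTop (nhds |L v|) := (hL v).abs
    refine le_of_tendsto h1 (Eventually.of_forall fun k => ?_)
    calc |⟪y k, v⟫| ≤ ‖y k‖ * ‖v‖ := abs_real_inner_le_norm _ _
      _ ≤ C * ‖v‖ := mul_le_mul_of_nonneg_right (hyC k) (norm_nonneg _)
  let Lf : H →ₗ[ℝ] ℝ := { toFun := L, map_add' := hLadd, map_smul' := hLsmul }
  let Lc : H →L[ℝ] ℝ := Lf.mkContinuous C (fun v => by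
    simpa [Lf, Real.norm_eq_abs] using hLbound v)
  refine ⟨(InnerProductSpace.toDual ℝ H).symm Lc, φ, hφ, fun v => ?_⟩
  rw [InnerProductSpace.toDual_symm_apply]
  exact hL v

theorem weak_convergence_of_generalized_relaxation_iteration (H : Type*)
    [NormedAddCommGroup H] [InnerProductSpace ℝ H] [CompleteSpace H]
    (T : H → H) (hfix : (Function.fixedPoints T).Nonempty)
    (κ : ℝ) (hκ : 1 / 2 < κ)
    (hcut : ∀ x, x ∉ Function.fixedPoints T → ∀ z ∈ Function.fixedPoints T,
      κ * ‖T x - x‖ ^ 2 ≤ ⟪z - x, T x - x⟫)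
    (hdemi : ∀ (x : ℕ → H) (y : H),
      (∀ v : H, Tendsto (fun k => ⟪x k, v⟫) atTop (nhds ⟪y, v⟫)) →
      Tendsto (fun k => T (x k) - x k) atTop (nhds 0) → T y = y)
    (σmax : H → ℝ) (hσκ : ∀ x, κ ≤ σmax x)
    (hσub : ∀ x, ∀ z ∈ Function.fixedPoints T,
      σmax x * ‖T x - x‖ ^ 2 ≤ ⟪z - x, T x - x⟫)
    (ε : ℝ) (hε : ε ∈ Set.Ioo (0 : ℝ) 1)
    (lam : ℕ → ℝ) (hlam : ∀ k, lam k ∈ Set.Icc ε (2 - ε))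
    (x : ℕ → H)
    (hx : ∀ k, x (k + 1) = x k + (lam k * σmax (x k)) • (T (x k) - x k)) :
    ∃ xs ∈ Function.fixedPoints T,
      ∀ v : H, Tendsto (fun k => ⟪x k, v⟫) atTop (nhds ⟪xs, v⟫) := by
  obtain ⟨hε0, hε1⟩ := hε
  obtain ⟨z0, hz0⟩ := hfix
  have hκ0 : (0:ℝ) < κ := by linarith
  -- key Fejér inequality
  have hkey : ∀ z ∈ Function.fixedPoints T, ∀ k,
      ‖x (k+1) - z‖^2 + (ε^2 * κ^2) * ‖T (x k) - x k‖^2 ≤ ‖x k - z‖^2 := by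
    intro z hz k
    have hl := hlam k
    obtain ⟨hl1, hl2⟩ := hl
    have hs := hσκ (x k)
    set d := T (x k) - x k with hd
    set s := σmax (x k) with hsdef
    set l := lam k with hldef
    have hexp : x (k+1) - z = (x k - z) + (l * s) • d := by
      rw [hx k, add_sub_right_comm]
    have hq : ‖x (k+1) - z‖^2
        = ‖x k - z‖^2 + 2 * ((l*s) * ⟪x k - z, d⟫) + (l*s)^2 * ‖d‖^2 := by
      rw [hexp, norm_add_sq_real, real_inner_smul_right, norm_smul,
        Real.norm_eq_abs, mul_pow, sq_abs]
    have hip : s * ‖d‖^2 ≤ ⟪z - x k, d⟫ := hσub (x k) z hz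
    have hip' : ⟪x k - z, d⟫ ≤ -(s * ‖d‖^2) := by
      have hsym : ⟪z - x k, d⟫ = -⟪x k - z, d⟫ := by
        rw [← neg_sub, inner_neg_left]
      linarith
    have hD : (0:ℝ) ≤ ‖d‖^2 := by positivity
    have hls : (0:ℝ) < l * s := by nlinarith
    have hstep : 2 * ((l*s) * ⟪x k - z, d⟫) ≤ 2 * ((l*s) * (-(s * ‖d‖^2))) := by
      have := mul_le_mul_of_nonneg_left hip' hls.le
      linarith
    have hl2' : ε^2 ≤ l * (2 - l) := by nlinarith
    have hs2 : κ^2 ≤ s^2 := by nlinarith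
    have hprod : ε^2 * κ^2 ≤ (l * (2 - l)) * s^2 :=
      mul_le_mul hl2' hs2 (by positivity) (by nlinarith)
    have hfinal : (l*s)^2 * ‖d‖^2 + 2 * ((l*s) * (-(s * ‖d‖^2)))
        + (ε^2 * κ^2) * ‖d‖^2 ≤ 0 := by
      nlinarith [mul_le_mul_of_nonneg_right hprod hD]
    linarith [hq, hstep, hfinal]
  have hcpos : (0:ℝ) < ε^2 * κ^2 := by positivity
  -- monotonicity and convergence of distances
  have hA : ∀ z ∈ Function.fixedPoints T, Antitone (fun k => ‖x k - z‖^2) := by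
    intro z hz
    apply antitone_nat_of_succ_le
    intro k
    have := hkey z hz k
    nlinarith [norm_nonneg (T (x k) - x k), sq_nonneg ‖T (x k) - x k‖]
  have hlimz : ∀ z ∈ Function.fixedPoints T,
      ∃ Lz, Tendsto (fun k => ‖x k - z‖^2) atTop (nhds Lz) := by
    intro z hz
    refine ⟨_, tendsto_atTop_ciInf (hA z hz) ⟨0, ?_⟩⟩
    rintro r ⟨k, rfl⟩
    positivity
  -- the residuals tend to zero
  have hd0 : Tendsto (fun k => T (x k) - x k) atTop (nhds 0) := by
    obtain ⟨L0, hL0⟩ := hlimz z0 hz0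
    have hshift : Tendsto (fun k => ‖x (k+1) - z0‖^2) atTop (nhds L0) :=
      hL0.comp (tendsto_add_atTop_nat 1)
    have hdiff : Tendsto (fun k => ‖x k - z0‖^2 - ‖x (k+1) - z0‖^2) atTop (nhds 0) := by
      simpa using hL0.sub hshift
    have hsq : Tendsto (fun k => ‖T (x k) - x k‖^2) atTop (nhds 0) := by
      have hub : ∀ k, ‖T (x k) - x k‖^2
          ≤ (‖x k - z0‖^2 - ‖x (k+1) - z0‖^2) / (ε^2 * κ^2) := by
        intro k
        rw [le_div_iff₀ hcpos]
        have := hkey z0 hz0 k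
        linarith
      have htend : Tendsto (fun k => (‖x k - z0‖^2 - ‖x (k+1) - z0‖^2) / (ε^2 * κ^2))
          atTop (nhds 0) := by
        simpa using hdiff.div_const (ε^2 * κ^2)
      exact squeeze_zero (fun k => by positivity) hub htend
    have hnorm : Tendsto (fun k => ‖T (x k) - x k‖) atTop (nhds 0) := by
      have h2 : Tendsto (fun k => Real.sqrt (‖T (x k) - x k‖^2)) atTop
          (nhds (Real.sqrt 0)) := (Real.continuous_sqrt.tendsto _).comp hsq
      have heq : (fun k => Real.sqrt (‖T (x k) - x k‖^2))
          = fun k => ‖T (x k) - x k‖ := funext fun k => Real.sqrt_sq (norm_nonneg _)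
      rw [heq, Real.sqrt_zero] at h2
      exact h2
    exact tendsto_zero_iff_norm_tendsto_zero.mpr hnorm
  -- boundedness
  set C : ℝ := ‖x 0 - z0‖ + ‖z0‖ with hCdef
  have hbound : ∀ k, ‖x k‖ ≤ C := by
    intro k
    have h1 : ‖x k - z0‖^2 ≤ ‖x 0 - z0‖^2 := hA z0 hz0 (Nat.zero_le k)
    have h2 : ‖x k - z0‖ ≤ ‖x 0 - z0‖ := by
      nlinarith [norm_nonneg (x k - z0), norm_nonneg (x 0 - z0)]
    calc ‖x k‖ = ‖(x k - z0) + z0‖ := by rw [sub_add_cancel]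
      _ ≤ ‖x k - z0‖ + ‖z0‖ := norm_add_le _ _
      _ ≤ C := by rw [hCdef]; linarith
  -- extract a weak limit
  obtain ⟨xs, φ, hφ, hweak⟩ := weak_seq_compact H x C hbound
  have hxsfix : T xs = xs := hdemi (fun k => x (φ k)) xs hweak (hd0.comp hφ.tendsto_atTop)
  have hxsmem : xs ∈ Function.fixedPoints T := hxsfix
  -- uniqueness of weak subsequential limits
  have huniq : ∀ (θ : ℕ → ℕ), Tendsto θ atTop atTop → ∀ ys,
      ys ∈ Function.fixedPoints T →
      (∀ v, Tendsto (fun k => ⟪x (θ k), v⟫) atTop (nhds ⟪ys, v⟫)) → ys = xs := by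
    intro θ hθ ys hysmem hweaky
    obtain ⟨Lx, hLx⟩ := hlimz xs hxsmem
    obtain ⟨Ly, hLy⟩ := hlimz ys hysmem
    set u : H := ys - xs with hu
    have hid : (fun k => ⟪x k, u⟫)
        = fun k => (‖x k - xs‖^2 - ‖x k - ys‖^2 - ‖xs‖^2 + ‖ys‖^2)/2 := by
      funext k
      have e1 := norm_sub_sq_real (x k) xs
      have e2 := norm_sub_sq_real (x k) ys
      have e3 : ⟪x k, u⟫ = ⟪x k, ys⟫ - ⟪x k, xs⟫ := inner_sub_right _ _ _
      linarith
    set μ : ℝ := (Lx - Ly - ‖xs‖^2 + ‖ys‖^2)/2 with hμ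
    have hmu : Tendsto (fun k => ⟪x k, u⟫) atTop (nhds μ) := by
      rw [hid]
      exact (((hLx.sub hLy).sub_const (‖xs‖^2)).add_const (‖ys‖^2)).div_const 2
    have h1 : ⟪xs, u⟫ = μ :=
      tendsto_nhds_unique (hweak u) (hmu.comp hφ.tendsto_atTop)
    have h2 : ⟪ys, u⟫ = μ := tendsto_nhds_unique (hweaky u) (hmu.comp hθ)
    have h3 : ⟪u, u⟫ = (0:ℝ) := by
      have := inner_sub_left (𝕜 := ℝ) ys xs u
      rw [← hu] at this
      linarith
    have h4 : u = 0 := inner_self_eq_zero.mp h3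
    rw [hu] at h4
    exact sub_eq_zero.mp h4
  refine ⟨xs, hxsmem, fun v => ?_⟩
  apply tendsto_of_subseq_tendsto
  intro ns hns
  obtain ⟨ys, ms, hms, hwys⟩ := weak_seq_compact H (fun k => x (ns k)) C
    (fun k => hbound (ns k))
  have hθ : Tendsto (fun k => ns (ms k)) atTop atTop := hns.comp hms.tendsto_atTop
  have hysfix : T ys = ys := hdemi (fun k => x (ns (ms k))) ys hwys (hd0.comp hθ)
  have hyseq : ys = xs := huniq (fun k => ns (ms k)) hθ ys hysfix hwys
  exact ⟨ms, hyseq ▸ hwys v⟩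
end

section
/- Define T₁ : ℝ → ℝ by T₁(x) = 1 + (1/2)(1/n + 1/(n+1)) if x = 1 + 1/n for some positive integer n, and T₁(x) = x/2 otherwise. Then Fix T₁ = {0}, T₁ is a strictly relaxed cutter (e.g., for the sequence x_n = 1 + 1/n one has |T₁(x_n) − x_n| → 0), but T₁ − Id is not demi-closed at 0: x_n = 1 + 1/n converges to 1, T₁(x_n) − x_n → 0, yet 1 ∉ Fix T₁. -/
open Filter

theorem counterexample_not_demiclosed
    (T₁ : ℝ → ℝ)
    (hT : ∀ n : ℕ, 0 < n → T₁ (1 + 1 / (n : ℝ)) =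
      1 + (1 / 2) * (1 / (n : ℝ) + 1 / ((n : ℝ) + 1)))
    (hT' : ∀ x : ℝ, (¬ ∃ n : ℕ, 0 < n ∧ x = 1 + 1 / (n : ℝ)) → T₁ x = x / 2) :
    Function.fixedPoints T₁ = {0} ∧
      (∃ α ∈ Set.Ioo (0 : ℝ) 2, ∀ x z : ℝ, z ∈ Function.fixedPoints T₁ →
        α * ((T₁ x - x) * (z - x)) ≥ (T₁ x - x) ^ 2) ∧
      Tendsto (fun n : ℕ => (1 : ℝ) + 1 / ((n : ℝ) + 1)) atTop (nhds 1) ∧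
      Tendsto (fun n : ℕ =>
        T₁ (1 + 1 / ((n : ℝ) + 1)) - (1 + 1 / ((n : ℝ) + 1))) atTop (nhds 0) ∧
      (1 : ℝ) ∉ Function.fixedPoints T₁ := by
  have hfix : Function.fixedPoints T₁ = {0} := by
    ext x
    simp only [Function.mem_fixedPoints, Function.IsFixedPt, Set.mem_singleton_iff]
    constructor
    · intro h
      by_cases hc : ∃ n : ℕ, 0 < n ∧ x = 1 + 1 / (n : ℝ)
      · obtain ⟨n, hn, rfl⟩ := hc
        rw [hT n hn] at h
        have hn0 : (0:ℝ) < (n:ℝ) := by exact_mod_cast hn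
        have h1 : 1 / ((n:ℝ)+1) < 1 / (n:ℝ) :=
          one_div_lt_one_div_of_lt hn0 (by linarith)
        linarith
      · rw [hT' x hc] at h; linarith
    · rintro rfl
      have hc : ¬ ∃ n : ℕ, 0 < n ∧ (0:ℝ) = 1 + 1 / (n : ℝ) := by
        rintro ⟨n, hn, h⟩
        have hn0 : (0:ℝ) < (n:ℝ) := by exact_mod_cast hn
        have : 0 < 1 / (n:ℝ) := by positivity
        linarith
      rw [hT' 0 hc]; ring
  have h1 : Tendsto (fun n : ℕ => 1 / ((n : ℝ) + 1)) atTop (nhds 0) :=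
    tendsto_one_div_add_atTop_nhds_zero_nat
  have h2 : Tendsto (fun n : ℕ => 1 / ((n : ℝ) + 2)) atTop (nhds 0) := by
    have := h1.comp (tendsto_add_atTop_nat 1)
    refine Tendsto.congr (fun n => ?_) this
    simp only [Function.comp]
    push_cast; ring_nf
  refine ⟨hfix, ⟨1, by norm_num, ?_⟩, ?_, ?_, ?_⟩
  · intro x z hz
    rw [hfix, Set.mem_singleton_iff] at hz
    subst hz
    by_cases hc : ∃ n : ℕ, 0 < n ∧ x = 1 + 1 / (n : ℝ)
    · obtain ⟨n, hn, rfl⟩ := hc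
      rw [hT n hn]
      have hn0 : (0:ℝ) < (n:ℝ) := by exact_mod_cast hn
      have hn1 : (1:ℝ) ≤ (n:ℝ) := by exact_mod_cast hn
      have ha1 : 1 / (n:ℝ) ≤ 1 := by
        rw [div_le_one hn0]; exact hn1
      have hb : 0 < 1 / ((n:ℝ)+1) := by positivity
      have hab : 1 / ((n:ℝ)+1) < 1 / (n:ℝ) :=
        one_div_lt_one_div_of_lt hn0 (by linarith)
      set a := 1 / (n:ℝ)
      set b := 1 / ((n:ℝ)+1)
      nlinarith [sq_nonneg (a - b), sq_nonneg (a + b)]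
    · rw [hT' x hc]
      nlinarith [sq_nonneg x]
  · have := h1.const_add (1:ℝ)
    simpa using this
  · have key : ∀ n : ℕ, T₁ (1 + 1 / ((n : ℝ) + 1)) - (1 + 1 / ((n : ℝ) + 1)) =
        (1/2) * (1 / ((n:ℝ) + 2)) - (1/2) * (1 / ((n:ℝ) + 1)) := by
      intro n
      have := hT (n + 1) (Nat.succ_pos n)
      push_cast at this
      rw [this]; ring
    have := (h2.const_mul (1/2:ℝ)).sub (h1.const_mul (1/2:ℝ))
    simp only [mul_zero, sub_zero] at this
    exact Tendsto.congr (fun n => (key n).symm) this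
  · rw [hfix]
    simp
end

section
/- Let A ∈ ℝ^{m×n}, b ∈ ℝ^m with the system Ax = b consistent, and let M ∈ ℝ^{m×m} be symmetric positive definite. For α ∈ (0,2), define T(x) = x + (α / ρ(AᵀMA)) Aᵀ M (b − Ax), where ρ denotes the spectral radius. Then Fix T = {x : Ax = b}, and T is an α-relaxed cutter: α⟨T(x) − x, z − x⟩ ≥ ‖T(x) − x‖² for all x ∈ ℝⁿ and all z with Az = b. -/
open RealInnerProductSpace Matrix

/-!
Write `B = AᵀMA`, positive semidefinite with largest eigenvalue `ρ`. Expanding in an orthonormal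
eigenbasis of `B`, where `B` acts by multipliers `0 ≤ λᵢ ≤ ρ`, gives `‖Bw‖² ≤ ρ⟪Bw, w⟫`. For any
solution `z` we have `T x - x = (α/ρ) B(z - x)`, so the cutter inequality is this bound scaled by
`(α/ρ)²`, and `x` is fixed iff `B(z - x) = 0`, i.e. iff `A(z - x) = 0` since `M` is positive
definite.
-/

theorem LinearMap.IsSymmetric.norm_apply_sq_le_mul_inner_of_eigenbasis
    {ι E : Type*} [Fintype ι] [NormedAddCommGroup E] [InnerProductSpace ℝ E]
    {T : E →ₗ[ℝ] E} (hT : T.IsSymmetric) (e : OrthonormalBasis ι ℝ E) {μ : ι → ℝ}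
    (he : ∀ i, T (e i) = μ i • e i) {ρ : ℝ} (h0 : ∀ i, 0 ≤ μ i) (hρ : ∀ i, μ i ≤ ρ) (v : E) :
    ‖T v‖ ^ 2 ≤ ρ * ⟪T v, v⟫ := by
  have hcoord : ∀ i, ⟪e i, T v⟫ = μ i * ⟪e i, v⟫ := fun i => by
    rw [← hT, he, real_inner_smul_left]
  rw [← real_inner_self_eq_norm_sq, ← e.sum_inner_mul_inner, ← e.sum_inner_mul_inner,
    Finset.mul_sum]
  refine Finset.sum_le_sum fun i _ => ?_
  rw [real_inner_comm (e i) (T v), hcoord]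
  nlinarith [mul_le_mul_of_nonneg_right (hρ i) (mul_nonneg (h0 i) (sq_nonneg ⟪e i, v⟫))]

theorem Matrix.PosSemidef.norm_toEuclideanLin_sq_le_mul_inner {ι : Type*} [Fintype ι]
    [DecidableEq ι] {B : Matrix ι ι ℝ} (hB : B.PosSemidef) {ρ : ℝ}
    (hρ : ∀ i, hB.isHermitian.eigenvalues i ≤ ρ) (v : EuclideanSpace ℝ ι) :
    ‖toEuclideanLin B v‖ ^ 2 ≤ ρ * ⟪toEuclideanLin B v, v⟫ :=
  (isSymmetric_toEuclideanLin_iff.mpr hB.isHermitian).norm_apply_sq_le_mul_inner_of_eigenbasis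
    hB.isHermitian.eigenvectorBasis
    (fun i => congrArg (WithLp.toLp 2) (hB.isHermitian.mulVec_eigenvectorBasis i))
    hB.eigenvalues_nonneg hρ v

theorem Matrix.PosDef.transpose_mul_mul_same_mulVec_eq_zero_iff {ι κ : Type*} [Fintype ι]
    [Fintype κ] {M : Matrix ι ι ℝ} (hM : M.PosDef) (A : Matrix ι κ ℝ) (v : κ → ℝ) :
    (Aᵀ * M * A) *ᵥ v = 0 ↔ A *ᵥ v = 0 := by
  refine ⟨fun h => ?_, fun h => by rw [← mulVec_mulVec, h, mulVec_zero]⟩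
  by_contra hAv
  have hpos := hM.dotProduct_mulVec_pos hAv
  have hquad : v ⬝ᵥ (Aᵀ * M * A) *ᵥ v = A *ᵥ v ⬝ᵥ M *ᵥ A *ᵥ v := by
    rw [Matrix.mul_assoc, ← mulVec_mulVec, dotProduct_mulVec, vecMul_transpose, mulVec_mulVec]
  rw [star_trivial, ← hquad, h, dotProduct_zero] at hpos
  exact hpos.false

theorem landweber_type_operator_is_relaxed_cutter
    (m n : ℕ) (A : Matrix (Fin m) (Fin n) ℝ) (b : Fin m → ℝ)
    (hconsistent : ∃ x₀ : EuclideanSpace ℝ (Fin n), A.mulVec x₀ = b)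
    (M : Matrix (Fin m) (Fin m) ℝ) (hM : M.PosDef)
    (hHerm : (Aᵀ * M * A).IsHermitian)
    (rho : ℝ) (hrho : rho = ⨆ i, hHerm.eigenvalues i)
    (α : ℝ) (hα : α ∈ Set.Ioo (0 : ℝ) 2)
    (T : EuclideanSpace ℝ (Fin n) → EuclideanSpace ℝ (Fin n))
    (hT : ∀ x, T x = x + (α / rho) • (WithLp.equiv 2 (Fin n → ℝ)).symm ((Aᵀ * M).mulVec (b - A.mulVec x))) :
    Function.fixedPoints T = {x : EuclideanSpace ℝ (Fin n) | A.mulVec x = b} ∧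
      ∀ x z : EuclideanSpace ℝ (Fin n), A.mulVec z = b →
        α * ⟪T x - x, z - x⟫ ≥ ‖T x - x‖ ^ 2 := by
  obtain ⟨x₀, hx₀⟩ := hconsistent
  set B := Aᵀ * M * A
  have hB : B.PosSemidef := by
    simpa only [conjTranspose_eq_transpose_of_trivial] using
      hM.posSemidef.conjTranspose_mul_mul_same A
  have hBρ := hB.norm_toEuclideanLin_sq_le_mul_inner fun i =>
    hrho ▸ le_ciSup (Set.finite_range _).bddAbove i
  have hstep : ∀ x z : EuclideanSpace ℝ (Fin n), A *ᵥ z = b →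
      T x - x = (α / rho) • toEuclideanLin B (z - x) := by
    intro x z hz
    rw [hT x, add_sub_cancel_left, ← hz, ← mulVec_sub, mulVec_mulVec]
    rfl
  refine ⟨Set.ext fun x => ?_, fun x z hz => ?_⟩
  · have hker : ∀ w, (α / rho) • toEuclideanLin B w = 0 ↔ A *ᵥ w = 0 := fun w => by
      refine smul_eq_zero.trans <| (or_iff_right_of_imp fun hc => ?_).trans ?_
      · have hrho0 : rho = 0 := (div_eq_zero_iff.mp hc).resolve_left hα.1.ne'
        simpa [hrho0] using hBρ w
      · exact (WithLp.toLp_eq_zero 2).trans (hM.transpose_mul_mul_same_mulVec_eq_zero_iff A w)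
    rw [Function.mem_fixedPoints, Function.IsFixedPt, ← sub_eq_zero, hstep x x₀ hx₀, hker,
      WithLp.ofLp_sub, mulVec_sub, hx₀, sub_eq_zero, eq_comm, Set.mem_ofPred_eq]
  · -- for `rho = 0` both sides vanish, as `α / 0 = 0`
    have hscale : α * (α / rho) = (α / rho) ^ 2 * rho := by
      rcases eq_or_ne rho 0 with h | h
      · simp [h]
      · field_simp
    rw [hstep x z hz, real_inner_smul_left, norm_smul, mul_pow, Real.norm_eq_abs, sq_abs]
    calc (α / rho) ^ 2 * ‖toEuclideanLin B (z - x)‖ ^ 2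
        ≤ (α / rho) ^ 2 * (rho * ⟪toEuclideanLin B (z - x), z - x⟫) :=
          mul_le_mul_of_nonneg_left (hBρ _) (sq_nonneg _)
      _ = α * (α / rho * ⟪toEuclideanLin B (z - x), z - x⟫) := by
          rw [← mul_assoc, ← hscale, mul_assoc]
end

section
/- Let g : ℝⁿ → ℝ be convex with S = {x : g(x) ≤ 0} ≠ ∅. Let g⁺(x) = max{0, g(x)} and for each x with g(x) > 0 let ℓ(x) ∈ ∂g(x) be a subgradient (necessarily ℓ(x) ≠ 0). For α ∈ (0,2) define T(x) = x − α g⁺(x)/‖ℓ(x)‖² · ℓ(x) when g(x) > 0, and T(x) = x otherwise. Then S ⊆ Fix T and T is an α-relaxed cutter with respect to S: α⟨T(x) − x, z − x⟩ ≥ ‖T(x) − x‖² for all x ∈ ℝⁿ and z ∈ S. -/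
/-! The subgradient inequality at `x`, evaluated at a point `z` of the sublevel set, gives
`g⁺(x) ≤ ⟪ℓ(x), x - z⟫`. Writing `T x - x = -c • ℓ(x)` with `c = α g⁺(x) / ‖ℓ(x)‖²`, this makes
`α ⟪T x - x, z - x⟫ = α c ⟪ℓ(x), x - z⟫ ≥ α c g⁺(x) = c² ‖ℓ(x)‖² = ‖T x - x‖²`. -/

open RealInnerProductSpace

section

variable {E : Type*} [NormedAddCommGroup E] [InnerProductSpace ℝ E]

theorem le_inner_sub_of_subgradient {g : E → ℝ} {l x z : E}
    (hl : ∀ y, ⟪l, y - x⟫ ≤ g y - g x) (hz : g z ≤ 0) : g x ≤ ⟪l, x - z⟫ := by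
  have := hl z
  rw [← neg_sub, inner_neg_right] at this
  linarith

/-- No `l ≠ 0` is needed: for `l = 0` both sides vanish, since `α * a / 0 = 0`. -/
theorem sq_norm_smul_le_mul_inner {l w : E} {a : ℝ} (ha : 0 ≤ a) (hal : a ≤ ⟪l, w⟫) (α : ℝ) :
    ‖(α * a / ‖l‖ ^ 2) • l‖ ^ 2 ≤ α * ⟪(α * a / ‖l‖ ^ 2) • l, w⟫ := by
  set c := α * a / ‖l‖ ^ 2
  have hc : 0 ≤ c * α := by
    simpa only [c, div_mul_eq_mul_div, mul_right_comm α a α] using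
      div_nonneg (mul_nonneg (mul_self_nonneg α) ha) (sq_nonneg ‖l‖)
  have hnorm : ‖c • l‖ ^ 2 = c * (α * a) := by
    rw [norm_smul, mul_pow, Real.norm_eq_abs, sq_abs]
    rcases eq_or_ne ‖l‖ 0 with hl | hl
    · simp [c, hl]
    · simp only [c]
      field_simp
  calc ‖c • l‖ ^ 2 = c * α * a := by rw [hnorm, mul_assoc]
    _ ≤ c * α * ⟪l, w⟫ := mul_le_mul_of_nonneg_left hal hc
    _ = α * ⟪c • l, w⟫ := by rw [real_inner_smul_left]; ring

end

theorem subgradient_projection_relaxed_cutter_general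
    (n : ℕ) (g : EuclideanSpace ℝ (Fin n) → ℝ)
    (S : Set (EuclideanSpace ℝ (Fin n))) (hS : S = {x | g x ≤ 0})
    (ℓ : EuclideanSpace ℝ (Fin n) → EuclideanSpace ℝ (Fin n))
    (hℓ : ∀ x, 0 < g x → ∀ y, ⟪ℓ x, y - x⟫ ≤ g y - g x)
    (α : ℝ)
    (T : EuclideanSpace ℝ (Fin n) → EuclideanSpace ℝ (Fin n))
    (hTpos : ∀ x, 0 < g x → T x = x - (α * max 0 (g x) / ‖ℓ x‖ ^ 2) • ℓ x)
    (hTnonpos : ∀ x, ¬ 0 < g x → T x = x) :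
    S ⊆ Function.fixedPoints T ∧
      ∀ x z, z ∈ S → α * ⟪T x - x, z - x⟫ ≥ ‖T x - x‖ ^ 2 := by
  subst hS
  refine ⟨fun x hx => hTnonpos x (not_lt.mpr hx), fun x z hz => ?_⟩
  by_cases hx : 0 < g x
  · have hgx : g x ≤ ⟪ℓ x, x - z⟫ := le_inner_sub_of_subgradient (hℓ x hx) hz
    rw [hTpos x hx, sub_sub_cancel_left, norm_neg, ← inner_neg_neg, neg_neg, neg_sub]
    exact sq_norm_smul_le_mul_inner (le_max_left _ _) (by rwa [max_eq_right hx.le]) α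
  · simp [hTnonpos x hx]

theorem subgradient_projection_relaxed_cutter
    (n : ℕ) (g : EuclideanSpace ℝ (Fin n) → ℝ)
    (hg : ConvexOn ℝ Set.univ g)
    (S : Set (EuclideanSpace ℝ (Fin n))) (hS : S = {x | g x ≤ 0}) (hSne : S.Nonempty)
    (ℓ : EuclideanSpace ℝ (Fin n) → EuclideanSpace ℝ (Fin n))
    (hℓ : ∀ x, 0 < g x → ∀ y, ⟪ℓ x, y - x⟫ ≤ g y - g x)
    (α : ℝ) (hα : α ∈ Set.Ioo (0 : ℝ) 2)
    (T : EuclideanSpace ℝ (Fin n) → EuclideanSpace ℝ (Fin n))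
    (hTpos : ∀ x, 0 < g x → T x = x - (α * max 0 (g x) / ‖ℓ x‖ ^ 2) • ℓ x)
    (hTnonpos : ∀ x, ¬ 0 < g x → T x = x) :
    S ⊆ Function.fixedPoints T ∧
      ∀ x z, z ∈ S → α * ⟪T x - x, z - x⟫ ≥ ‖T x - x‖ ^ 2 :=
  subgradient_projection_relaxed_cutter_general n g S hS ℓ hℓ α T hTpos hTnonpos
end

section
/- Let H be a real Hilbert space, Ω ⊆ H a nonempty closed convex set, and T : H → H an η-relaxed cutter with η ∈ (0,2) and Fix T ∩ Ω ≠ ∅. Then the composition P_Ω ∘ T (metric projection onto Ω after T) is strongly quasi-nonexpansive with respect to Fix T ∩ Ω, and in particular is asymptotically regular: for any x⁰, the sequence x^{k+1} = P_Ω T(x^k) satisfies ‖P_Ω T(x^k) − x^k‖ → 0. -/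
open RealInnerProductSpace Filter

/-!
A relaxed cutter with relaxation `η ∈ (0, 2)` is `(2/η - 1)`-strongly quasi-nonexpansive with
respect to its fixed points, and the metric projection onto `Ω` is a cutter, hence `1`-SQNE with
respect to `Ω`. Chaining the two SQNE inequalities and using
`(a + b)² ≤ (1/α + 1/β)(α a² + β b²)` shows that `P_Ω ∘ T` is SQNE with respect to `Fix T ∩ Ω`.
Along an orbit the squared distances to a common fixed point then telescope, so the squared
step lengths are summable and in particular tend to zero.
-/

lemma mul_div_add_mul_sq_le {a b c α β : ℝ} (hα : 0 < α) (hβ : 0 < β) (hc : 0 ≤ c)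
    (habc : c ≤ a + b) :
    α * β / (α + β) * c ^ 2 ≤ α * a ^ 2 + β * b ^ 2 := by
  have hsq : c ^ 2 ≤ (a + b) ^ 2 := pow_le_pow_left₀ hc habc 2
  rw [div_mul_eq_mul_div, div_le_iff₀ (add_pos hα hβ)]
  nlinarith [sq_nonneg (α * a - β * b), mul_pos hα hβ]

def StronglyQuasiNonexpansive {H : Type*} [NormedAddCommGroup H] (α : ℝ) (F : Set H)
    (S : H → H) : Prop :=
  ∀ x, ∀ z ∈ F, ‖S x - z‖ ^ 2 ≤ ‖x - z‖ ^ 2 - α * ‖S x - x‖ ^ 2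

namespace StronglyQuasiNonexpansive

variable {H : Type*} [NormedAddCommGroup H] {α β : ℝ} {F G : Set H} {S R : H → H}

lemma comp (hS : StronglyQuasiNonexpansive α F S) (hR : StronglyQuasiNonexpansive β G R)
    (hα : 0 < α) (hβ : 0 < β) :
    StronglyQuasiNonexpansive (α * β / (α + β)) (F ∩ G) (S ∘ R) := by
  rintro x z ⟨hzF, hzG⟩
  have hS' := hS (R x) z hzF
  have hR' := hR x z hzG
  have hstep := mul_div_add_mul_sq_le hα hβ (norm_nonneg _)
    (norm_sub_le_norm_sub_add_norm_sub (S (R x)) (R x) x)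
  simp only [Function.comp_apply]
  linarith

lemma summable_sq_norm_sub (hS : StronglyQuasiNonexpansive α F S) (hα : 0 < α) {z : H}
    (hz : z ∈ F) {x : ℕ → H} (hx : ∀ k, x (k + 1) = S (x k)) :
    Summable fun k => ‖S (x k) - x k‖ ^ 2 := by
  refine summable_of_sum_range_le (c := ‖x 0 - z‖ ^ 2 / α) (fun _ => sq_nonneg _) fun n => ?_
  rw [le_div_iff₀ hα, Finset.sum_mul]
  calc ∑ k ∈ Finset.range n, ‖S (x k) - x k‖ ^ 2 * α
      ≤ ∑ k ∈ Finset.range n, (‖x k - z‖ ^ 2 - ‖x (k + 1) - z‖ ^ 2) :=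
        Finset.sum_le_sum fun k _ => by
          have := hS (x k) z hz
          rw [hx]
          linarith
    _ = ‖x 0 - z‖ ^ 2 - ‖x n - z‖ ^ 2 := Finset.sum_range_sub' _ n
    _ ≤ ‖x 0 - z‖ ^ 2 := sub_le_self _ (sq_nonneg _)

lemma tendsto_norm_sub_zero (hS : StronglyQuasiNonexpansive α F S) (hα : 0 < α)
    (hF : F.Nonempty) {x : ℕ → H} (hx : ∀ k, x (k + 1) = S (x k)) :
    Tendsto (fun k => ‖S (x k) - x k‖) atTop (nhds 0) := by
  obtain ⟨z, hz⟩ := hF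
  have h := (hS.summable_sq_norm_sub hα hz hx).tendsto_atTop_zero.sqrt
  simpa only [Real.sqrt_sq (norm_nonneg _), Real.sqrt_zero] using h

end StronglyQuasiNonexpansive

section InnerProductSpace

variable {H : Type*} [NormedAddCommGroup H] [InnerProductSpace ℝ H]

lemma norm_sub_sq_le_of_relaxed_cutter {x y z : H} {η : ℝ} (hη : 0 < η)
    (h : ‖y - x‖ ^ 2 ≤ η * ⟪y - x, z - x⟫) :
    ‖y - z‖ ^ 2 ≤ ‖x - z‖ ^ 2 - (2 / η - 1) * ‖y - x‖ ^ 2 := by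
  have hexpand : ‖y - z‖ ^ 2 = ‖y - x‖ ^ 2 - 2 * ⟪y - x, z - x⟫ + ‖x - z‖ ^ 2 := by
    rw [← norm_sub_rev z x, ← norm_sub_sq_real, sub_sub_sub_cancel_right]
  have hinner : 2 / η * ‖y - x‖ ^ 2 ≤ 2 * ⟪y - x, z - x⟫ := by
    rw [div_mul_eq_mul_div, div_le_iff₀ hη]
    linarith
  linarith

lemma norm_sub_sq_le_inner_of_inner_nonpos {x p z : H} (h : ⟪x - p, z - p⟫ ≤ 0) :
    ‖p - x‖ ^ 2 ≤ ⟪p - x, z - x⟫ := by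
  have hsplit : ⟪p - x, z - x⟫ = ‖p - x‖ ^ 2 - ⟪x - p, z - p⟫ := by
    rw [← sub_add_sub_cancel z p x, inner_add_right, real_inner_self_eq_norm_sq,
      ← neg_sub x p, inner_neg_left]
    ring
  linarith

namespace StronglyQuasiNonexpansive

variable {F : Set H} {S : H → H}

lemma of_relaxed_cutter {η : ℝ} (hη : 0 < η)
    (hS : ∀ x, ∀ z ∈ F, η * ⟪S x - x, z - x⟫ ≥ ‖S x - x‖ ^ 2) :
    StronglyQuasiNonexpansive (2 / η - 1) F S :=
  fun x z hz => norm_sub_sq_le_of_relaxed_cutter hη (hS x z hz)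

lemma of_inner_nonpos (hS : ∀ x, ∀ z ∈ F, ⟪x - S x, z - S x⟫ ≤ 0) :
    StronglyQuasiNonexpansive 1 F S := by
  have h := of_relaxed_cutter (S := S) (F := F) one_pos fun x z hz => by
    rw [one_mul]
    exact norm_sub_sq_le_inner_of_inner_nonpos (hS x z hz)
  norm_num at h
  exact h

end StronglyQuasiNonexpansive

end InnerProductSpace

theorem projected_relaxed_cutter_sqne_and_asymptotically_regular_general
    (H : Type*) [NormedAddCommGroup H] [InnerProductSpace ℝ H]
    (Ω : Set H)
    (T : H → H) (η : ℝ) (hη : η ∈ Set.Ioo (0 : ℝ) 2)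
    (hT : ∀ x, ∀ z ∈ Function.fixedPoints T,
      η * ⟪T x - x, z - x⟫ ≥ ‖T x - x‖ ^ 2)
    (hfix : (Function.fixedPoints T ∩ Ω).Nonempty)
    (P : H → H)
    (hP : ∀ x, P x ∈ Ω ∧ ∀ y ∈ Ω, ⟪x - P x, y - P x⟫ ≤ 0) :
    (∃ β > (0 : ℝ), ∀ x, ∀ z ∈ Function.fixedPoints T ∩ Ω,
        ‖P (T x) - z‖ ^ 2 ≤ ‖x - z‖ ^ 2 - β * ‖P (T x) - x‖ ^ 2) ∧
      ∀ x : ℕ → H, (∀ k, x (k + 1) = P (T (x k))) →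
        Tendsto (fun k => ‖P (T (x k)) - x k‖) atTop (nhds 0) := by
  obtain ⟨hη0, hη2⟩ := hη
  have hα : 0 < 2 / η - 1 := sub_pos.mpr ((one_lt_div hη0).mpr hη2)
  have hPT := (StronglyQuasiNonexpansive.of_inner_nonpos fun x => (hP x).2).comp
    (StronglyQuasiNonexpansive.of_relaxed_cutter hη0 hT) one_pos hα
  rw [Set.inter_comm] at hPT
  have hβ : 0 < 1 * (2 / η - 1) / (1 + (2 / η - 1)) := by positivity
  exact ⟨⟨_, hβ, hPT⟩, fun x hx => hPT.tendsto_norm_sub_zero hβ hfix hx⟩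

theorem projected_relaxed_cutter_sqne_and_asymptotically_regular
    (H : Type*) [NormedAddCommGroup H] [InnerProductSpace ℝ H] [CompleteSpace H]
    (Ω : Set H) (hΩne : Ω.Nonempty) (hΩclosed : IsClosed Ω) (hΩconvex : Convex ℝ Ω)
    (T : H → H) (η : ℝ) (hη : η ∈ Set.Ioo (0 : ℝ) 2)
    (hT : ∀ x, ∀ z ∈ Function.fixedPoints T,
      η * ⟪T x - x, z - x⟫ ≥ ‖T x - x‖ ^ 2)
    (hfix : (Function.fixedPoints T ∩ Ω).Nonempty)
    (P : H → H)
    (hP : ∀ x, P x ∈ Ω ∧ ∀ y ∈ Ω, ⟪x - P x, y - P x⟫ ≤ 0) :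
    (∃ β > (0 : ℝ), ∀ x, ∀ z ∈ Function.fixedPoints T ∩ Ω,
        ‖P (T x) - z‖ ^ 2 ≤ ‖x - z‖ ^ 2 - β * ‖P (T x) - x‖ ^ 2) ∧
      ∀ x : ℕ → H, (∀ k, x (k + 1) = P (T (x k))) →
        Tendsto (fun k => ‖P (T (x k)) - x k‖) atTop (nhds 0) :=
  projected_relaxed_cutter_sqne_and_asymptotically_regular_general H Ω T η hη hT hfix P hP
end
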